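/- arXiv:2301.11186 — 5 statements merged into one kernel-verified Lean document; each statement's English description precedes it below -/
import Mathlib

section
/- Let α = (α_n)_{n∈ℕ₀} be an exponent sequence and w ∈ 𝕂^{ℕ₀}. Then: (i) if B_w is continuous on Λ_∞(α), then B_w is topologizable on Λ_∞(α) if and only if sup_{m∈ℕ} limsup_{n→∞} ln(∏_{j=0}^{m−1} |w_{n+j}|) / α_{n+m} < ∞; (ii) if F_w is continuous on Λ_∞(α), then F_w is topologizable on Λ_∞(α) if and only if for every k ∈ ℕ₀ one has sup_{m∈ℕ} limsup_{n→∞} ( ln(∏_{j=1}^{m} |w_{n+j}|) + k α_{n+m} ) / α_n < ∞; (iii) if B_w is continuous on Λ_0(α) and topologizable on Λ_0(α), then sup_{m∈ℕ} limsup_{n→∞} ln(∏_{j=0}^{m−1} |w_{n+j}|) / α_{n+m} ≤ 0, and if additionally sup_{n∈ℕ} (α_{n+1} − α_n) < ∞, this condition conversely implies that B_w is topologizable on Λ_0(α); (iv) if F_w is continuous on Λ_0(α), then F_w is topologizable on Λ_0(α) if and only if sup_{m∈ℕ} limsup_{n→∞} ln(∏_{j=1}^{m} |w_{n+j}|) /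 α_{n+m} ≤ 0. -/
open Filter Finset
open scoped ENNReal

noncomputable section

variable {𝕜 : Type*} [RCLike 𝕜]

/-- The parameter `p ∈ [1,∞] ∪ {0}` indexing a Köthe echelon space `λ_p(A)`:
`lp p _` stands for `p ∈ [1,∞)`, `linf` for `p = ∞` and `lzero` for `p = 0`. -/
inductive PIndex : Type
  | lp : (p : ℝ) → (hp : 1 ≤ p) → PIndex
  | linf : PIndex
  | lzero : PIndex

/-- `a` is a Köthe matrix. -/
def IsKoetheMatrix (a : ℕ → ℕ → ℝ) : Prop :=
  (∀ n k, 0 ≤ a n k) ∧ (∀ n k, a n k ≤ a n (k + 1)) ∧ ∀ n, ∃ k, 0 < a n k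

/-- Membership in the Köthe echelon space `λ_p(A)`. -/
def MemLambda (a : ℕ → ℕ → ℝ) (P : PIndex) (x : ℕ → 𝕜) : Prop :=
  match P with
  | .lp p _ => ∀ k, Summable fun n => (‖x n‖ * a n k) ^ p
  | .linf => ∀ k, BddAbove (Set.range fun n => ‖x n‖ * a n k)
  | .lzero => ∀ k, Tendsto (fun n => ‖x n‖ * a n k) atTop (nhds 0)

/-- The `k`-th canonical seminorm `‖·‖_{k,p}` of `λ_p(A)`. -/
def lambdaSeminorm (a : ℕ → ℕ → ℝ) (P : PIndex) (k : ℕ) (x : ℕ → 𝕜) : ℝ :=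
  match P with
  | .lp p _ => (∑' n, (‖x n‖ * a n k) ^ p) ^ (1 / p)
  | .linf => ⨆ n, ‖x n‖ * a n k
  | .lzero => ⨆ n, ‖x n‖ * a n k

/-- The weighted backward shift `B_w x = (w_n x_{n+1})_n`. -/
def Bshift (w : ℕ → 𝕜) (x : ℕ → 𝕜) : ℕ → 𝕜 := fun n => w n * x (n + 1)

/-- The weighted forward shift `F_w x = (w_n x_{n-1})_n`, with the convention `x_{-1} := 0`. -/
def Fshift (w : ℕ → 𝕜) (x : ℕ → 𝕜) : ℕ → 𝕜 := fun n => if n = 0 then 0 else w n * x (n - 1)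

/-- `T` maps `λ_p(A)` into itself (i.e. `T` is correctly defined on `λ_p(A)`). -/
def MapsLambda (a : ℕ → ℕ → ℝ) (P : PIndex) (T : (ℕ → 𝕜) → ℕ → 𝕜) : Prop :=
  ∀ x, MemLambda a P x → MemLambda a P (T x)

/-- `T` is a continuous operator on the Fréchet space `λ_p(A)`, expressed through the
fundamental (increasing) sequence of seminorms. -/
def ContinuousOnLambda (a : ℕ → ℕ → ℝ) (P : PIndex) (T : (ℕ → 𝕜) → ℕ → 𝕜) : Prop :=
  MapsLambda a P T ∧ ∀ k, ∃ l, ∃ C > 0, ∀ x, MemLambda a P x →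
    lambdaSeminorm a P k (T x) ≤ C * lambdaSeminorm a P l x

/-- `T` is topologizable on `λ_p(A)`: for every (fundamental) continuous seminorm there is a
continuous seminorm `q` such that for every `m ∈ ℕ` there is `γ_m > 0` with
`‖T^m x‖_k ≤ γ_m q(x)`. -/
def TopologizableOnLambda (a : ℕ → ℕ → ℝ) (P : PIndex) (T : (ℕ → 𝕜) → ℕ → 𝕜) : Prop :=
  ∀ k, ∃ l, ∀ m : ℕ, 1 ≤ m → ∃ γ > 0, ∀ x, MemLambda a P x →
    lambdaSeminorm a P k (T^[m] x) ≤ γ * lambdaSeminorm a P l x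

/-- `T` is power bounded on `λ_p(A)`. -/
def PowerBoundedOnLambda (a : ℕ → ℕ → ℝ) (P : PIndex) (T : (ℕ → 𝕜) → ℕ → 𝕜) : Prop :=
  ∀ k, ∃ l, ∃ C > 0, ∀ m : ℕ, 1 ≤ m → ∀ x, MemLambda a P x →
    lambdaSeminorm a P k (T^[m] x) ≤ C * lambdaSeminorm a P l x

/-- The `n`-th Cesàro mean `T^{[n]} = (1/n) ∑_{m=1}^n T^m`. -/
def cesaroMean (T : (ℕ → 𝕜) → ℕ → 𝕜) (n : ℕ) (x : ℕ → 𝕜) : ℕ → 𝕜 :=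
  (n : 𝕜)⁻¹ • ∑ m ∈ Icc 1 n, T^[m] x

/-- `T` is Cesàro bounded on `λ_p(A)`: the Cesàro means form an equicontinuous family. -/
def CesaroBoundedOnLambda (a : ℕ → ℕ → ℝ) (P : PIndex) (T : (ℕ → 𝕜) → ℕ → 𝕜) : Prop :=
  ∀ k, ∃ l, ∃ C > 0, ∀ n : ℕ, 1 ≤ n → ∀ x, MemLambda a P x →
    lambdaSeminorm a P k (cesaroMean T n x) ≤ C * lambdaSeminorm a P l x

/-- `T` is mean ergodic on `λ_p(A)`: there is a continuous linear operator `P` on `λ_p(A)` such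
that the Cesàro means `T^{[n]} x` converge to `P x` for every `x ∈ λ_p(A)`. -/
def MeanErgodicOnLambda (a : ℕ → ℕ → ℝ) (P : PIndex) (T : (ℕ → 𝕜) → ℕ → 𝕜) : Prop :=
  ∃ Pr : (ℕ → 𝕜) →ₗ[𝕜] (ℕ → 𝕜),
    (∀ x, MemLambda a P x → MemLambda a P (Pr x)) ∧
    (∀ k, ∃ l, ∃ C > 0, ∀ x, MemLambda a P x →
      lambdaSeminorm a P k (Pr x) ≤ C * lambdaSeminorm a P l x) ∧
    ∀ x, MemLambda a P x → ∀ k,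
      Tendsto (fun n => lambdaSeminorm a P k (cesaroMean T n x - Pr x)) atTop (nhds 0)

/-- `T` is uniformly mean ergodic on `λ_p(A)`: in addition the convergence of the Cesàro means
is uniform on bounded subsets of `λ_p(A)`. -/
def UniformlyMeanErgodicOnLambda (a : ℕ → ℕ → ℝ) (P : PIndex) (T : (ℕ → 𝕜) → ℕ → 𝕜) : Prop :=
  ∃ Pr : (ℕ → 𝕜) →ₗ[𝕜] (ℕ → 𝕜),
    (∀ x, MemLambda a P x → MemLambda a P (Pr x)) ∧
    (∀ k, ∃ l, ∃ C > 0, ∀ x, MemLambda a P x →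
      lambdaSeminorm a P k (Pr x) ≤ C * lambdaSeminorm a P l x) ∧
    ∀ S : Set (ℕ → 𝕜), (∀ x ∈ S, MemLambda a P x) →
      (∀ l, ∃ M : ℝ, ∀ x ∈ S, lambdaSeminorm a P l x ≤ M) →
      ∀ k, ∀ ε > 0, ∃ N : ℕ, ∀ n ≥ N, ∀ x ∈ S,
        lambdaSeminorm a P k (cesaroMean T n x - Pr x) ≤ ε

/-- An exponent sequence: monotonically increasing, non-negative, tending to infinity. -/
def IsExponentSeq (al : ℕ → ℝ) : Prop :=
  Monotone al ∧ (∀ n, 0 ≤ al n) ∧ Tendsto al atTop atTop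

/-- The Köthe matrix of the power series space of infinite type `Λ_∞(α)`. -/
def AInf (al : ℕ → ℝ) : ℕ → ℕ → ℝ := fun n k => Real.exp (k * al n)

/-- The Köthe matrix of the power series space of finite type `Λ_0(α)`. -/
def AZero (al : ℕ → ℝ) : ℕ → ℕ → ℝ := fun n k => Real.exp (-al n / (k + 1))

/-- Power series spaces are the `λ_1` spaces of the above matrices. -/
abbrev L1 : PIndex := PIndex.lp 1 le_rfl

/-! ### Auxiliary lemmas -/

section Aux

variable {𝕜 : Type*} [RCLike 𝕜]

lemma sem_eq (a : ℕ → ℕ → ℝ) (k : ℕ) (x : ℕ → 𝕜) :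
    lambdaSeminorm a L1 k x = ∑' n, ‖x n‖ * a n k := by
  show (∑' n, (‖x n‖ * a n k) ^ (1 : ℝ)) ^ (1 / (1 : ℝ)) = _
  simp [Real.rpow_one]

lemma mem_summable {a : ℕ → ℕ → ℝ} {x : ℕ → 𝕜} (hx : MemLambda a L1 x) (k : ℕ) :
    Summable fun n => ‖x n‖ * a n k := by
  have h : Summable fun n => (‖x n‖ * a n k) ^ (1 : ℝ) := hx k
  simpa [Real.rpow_one] using h

/-- The `N`-th unit vector. -/
def eV (N : ℕ) : ℕ → 𝕜 := fun n => if n = N then 1 else 0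

lemma eV_mem (a : ℕ → ℕ → ℝ) (N : ℕ) : MemLambda a L1 (eV N : ℕ → 𝕜) := by
  intro k
  apply summable_of_ne_finset_zero (s := {N})
  intro n hn
  simp only [Finset.mem_singleton] at hn
  simp [eV, hn, Real.rpow_one]

lemma sem_single (a : ℕ → ℕ → ℝ) (k : ℕ) (x : ℕ → 𝕜) (N : ℕ) (h : ∀ n, n ≠ N → x n = 0) :
    lambdaSeminorm a L1 k x = ‖x N‖ * a N k := by
  rw [sem_eq]
  exact tsum_eq_single N fun n hn => by rw [h n hn]; simp

lemma sem_eV (a : ℕ → ℕ → ℝ) (k : ℕ) (N : ℕ) :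
    lambdaSeminorm a L1 k (eV N : ℕ → 𝕜) = a N k := by
  rw [sem_single a k _ N (fun n hn => by simp [eV, hn])]
  simp [eV]

lemma bshift_iter (w : ℕ → 𝕜) (m : ℕ) (x : ℕ → 𝕜) (n : ℕ) :
    (Bshift w)^[m] x n = (∏ j ∈ range m, w (n + j)) * x (n + m) := by
  induction m generalizing x with
  | zero => simp
  | succ m ih =>
    rw [Function.iterate_succ_apply, ih]
    simp only [Bshift, Finset.prod_range_succ]
    rw [show n + m + 1 = n + (m + 1) by omega]
    ring

lemma fshift_iter_lt (w : ℕ → 𝕜) (m : ℕ) (x : ℕ → 𝕜) : ∀ n < m, (Fshift w)^[m] x n = 0 := by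
  induction m with
  | zero => omega
  | succ m ih =>
    intro n hn
    rw [Function.iterate_succ_apply']
    show (if n = 0 then (0 : 𝕜) else w n * (Fshift w)^[m] x (n - 1)) = 0
    rcases Nat.eq_zero_or_pos n with h0 | h0
    · simp [h0]
    · rw [if_neg (by omega), ih _ (by omega), mul_zero]

lemma fshift_iter_add (w : ℕ → 𝕜) (m : ℕ) (x : ℕ → 𝕜) (n : ℕ) :
    (Fshift w)^[m] x (n + m) = (∏ j ∈ Icc 1 m, w (n + j)) * x n := by
  induction m with
  | zero => simp
  | succ m ih =>
    rw [show n + (m + 1) = (n + m) + 1 by omega, Function.iterate_succ_apply']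
    show (if (n + m) + 1 = 0 then (0 : 𝕜) else w ((n + m) + 1) * (Fshift w)^[m] x ((n + m) + 1 - 1)) = _
    rw [if_neg (by omega)]
    simp only [Nat.add_sub_cancel, ih, Finset.prod_Icc_succ_top (by omega : 1 ≤ m + 1)]
    rw [show n + m + 1 = n + (m + 1) by omega]
    ring

lemma core_B (a : ℕ → ℕ → ℝ) (ha : ∀ n k, 0 ≤ a n k) (w : ℕ → 𝕜) :
    TopologizableOnLambda a L1 (Bshift w) ↔
      ∀ k, ∃ l, ∀ m, 1 ≤ m → ∃ γ > 0, ∀ n,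
        (∏ j ∈ range m, ‖w (n + j)‖) * a n k ≤ γ * a (n + m) l := by
  constructor
  · intro h k
    obtain ⟨l, hl⟩ := h k
    refine ⟨l, fun m hm => ?_⟩
    obtain ⟨γ, hγ, hb⟩ := hl m hm
    refine ⟨γ, hγ, fun n => ?_⟩
    have := hb (eV (n + m)) (eV_mem a (n + m))
    rw [sem_eV] at this
    rw [sem_single a k _ n (fun j hj => by
      rw [bshift_iter]
      simp [eV, hj])] at this
    rw [bshift_iter] at this
    simpa [eV, norm_prod] using this
  · intro h k
    obtain ⟨l, hl⟩ := h k
    refine ⟨l, fun m hm => ?_⟩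
    obtain ⟨γ, hγ, hb⟩ := hl m hm
    refine ⟨γ, hγ, fun x hx => ?_⟩
    rw [sem_eq, sem_eq]
    have hg : Summable fun N => γ * (‖x N‖ * a N l) := (mem_summable hx l).mul_left γ
    have hpt : ∀ n, ‖(Bshift w)^[m] x n‖ * a n k ≤ γ * (‖x (n + m)‖ * a (n + m) l) := by
      intro n
      rw [bshift_iter, norm_mul, norm_prod]
      calc (∏ j ∈ range m, ‖w (n + j)‖) * ‖x (n + m)‖ * a n k
          = ((∏ j ∈ range m, ‖w (n + j)‖) * a n k) * ‖x (n + m)‖ := by ring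
        _ ≤ (γ * a (n + m) l) * ‖x (n + m)‖ :=
            mul_le_mul_of_nonneg_right (hb n) (norm_nonneg _)
        _ = γ * (‖x (n + m)‖ * a (n + m) l) := by ring
    have hf : Summable fun n => ‖(Bshift w)^[m] x n‖ * a n k := by
      refine Summable.of_nonneg_of_le
        (fun n => mul_nonneg (norm_nonneg _) (ha n k)) hpt ?_
      exact hg.comp_injective (add_left_injective m)
    calc ∑' n, ‖(Bshift w)^[m] x n‖ * a n k
        ≤ ∑' N, γ * (‖x N‖ * a N l) := by
          refine Summable.tsum_le_tsum_of_inj (fun n => n + m) (add_left_injective m)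
            (fun c _ => mul_nonneg hγ.le (mul_nonneg (norm_nonneg _) (ha c l))) hpt hf hg
      _ = γ * ∑' N, ‖x N‖ * a N l := tsum_mul_left

lemma core_F (a : ℕ → ℕ → ℝ) (ha : ∀ n k, 0 ≤ a n k) (w : ℕ → 𝕜) :
    TopologizableOnLambda a L1 (Fshift w) ↔
      ∀ k, ∃ l, ∀ m, 1 ≤ m → ∃ γ > 0, ∀ n,
        (∏ j ∈ Icc 1 m, ‖w (n + j)‖) * a (n + m) k ≤ γ * a n l := by
  constructor
  · intro h k
    obtain ⟨l, hl⟩ := h k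
    refine ⟨l, fun m hm => ?_⟩
    obtain ⟨γ, hγ, hb⟩ := hl m hm
    refine ⟨γ, hγ, fun n => ?_⟩
    have := hb (eV n) (eV_mem a n)
    rw [sem_eV] at this
    rw [sem_single a k _ (n + m) (fun j hj => ?_)] at this
    · rw [fshift_iter_add] at this
      simpa [eV, norm_mul, norm_prod] using this
    · rcases lt_or_ge j m with hjm | hjm
      · exact fshift_iter_lt w m _ j hjm
      · rw [show j = (j - m) + m by omega, fshift_iter_add]
        simp [eV, show j - m ≠ n by omega]
  · intro h k
    obtain ⟨l, hl⟩ := h k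
    refine ⟨l, fun m hm => ?_⟩
    obtain ⟨γ, hγ, hb⟩ := hl m hm
    refine ⟨γ, hγ, fun x hx => ?_⟩
    rw [sem_eq, sem_eq]
    have hg : Summable fun n => γ * (‖x n‖ * a n l) := (mem_summable hx l).mul_left γ
    have hpt : ∀ n, ‖(Fshift w)^[m] x (n + m)‖ * a (n + m) k ≤ γ * (‖x n‖ * a n l) := by
      intro n
      rw [fshift_iter_add, norm_mul, norm_prod]
      calc (∏ j ∈ Icc 1 m, ‖w (n + j)‖) * ‖x n‖ * a (n + m) k
          = ((∏ j ∈ Icc 1 m, ‖w (n + j)‖) * a (n + m) k) * ‖x n‖ := by ring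
        _ ≤ (γ * a n l) * ‖x n‖ := mul_le_mul_of_nonneg_right (hb n) (norm_nonneg _)
        _ = γ * (‖x n‖ * a n l) := by ring
    have hshift : (∑' n, ‖(Fshift w)^[m] x (n + m)‖ * a (n + m) k)
        = ∑' N, ‖(Fshift w)^[m] x N‖ * a N k := by
      refine Function.Injective.tsum_eq (g := fun n => n + m)
        (f := fun N => ‖(Fshift w)^[m] x N‖ * a N k) (add_left_injective m) ?_
      intro N hN
      simp only [Function.mem_support] at hN
      by_contra hmem
      rcases lt_or_ge N m with hNm | hNm
      · rw [fshift_iter_lt w m x N hNm] at hN; simp at hN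
      · exact hmem ⟨N - m, by show N - m + m = N; omega⟩
    rw [← hshift]
    have hf : Summable fun n => ‖(Fshift w)^[m] x (n + m)‖ * a (n + m) k :=
      Summable.of_nonneg_of_le (fun n => mul_nonneg (norm_nonneg _) (ha _ k)) hpt hg
    calc ∑' n, ‖(Fshift w)^[m] x (n + m)‖ * a (n + m) k
        ≤ ∑' n, γ * (‖x n‖ * a n l) := Summable.tsum_le_tsum hpt hf hg
      _ = γ * ∑' n, ‖x n‖ * a n l := tsum_mul_left

lemma gamma_of_eventually (u v : ℕ → ℝ) (hu : ∀ n, 0 ≤ u n) (hv : ∀ n, 0 < v n)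
    (β : ℝ) (h : ∀ᶠ n in atTop, u n ≤ β * v n) : ∃ γ > 0, ∀ n, u n ≤ γ * v n := by
  obtain ⟨N, hN⟩ := eventually_atTop.mp h
  set γ := max β 1 + ∑ n ∈ range N, u n / v n with hγdef
  have hsum : 0 ≤ ∑ n ∈ range N, u n / v n :=
    Finset.sum_nonneg fun i _ => div_nonneg (hu i) (hv i).le
  have hγ1 : (1 : ℝ) ≤ γ := le_add_of_le_of_nonneg (le_max_right _ _) hsum
  refine ⟨γ, by linarith, fun n => ?_⟩
  rcases lt_or_ge n N with hn | hn
  · have h1 : u n / v n ≤ ∑ i ∈ range N, u i / v i :=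
      Finset.single_le_sum (fun i _ => div_nonneg (hu i) (hv i).le) (Finset.mem_range.mpr hn)
    have h2 : u n / v n ≤ γ := by
      have : (0:ℝ) ≤ max β 1 := le_trans zero_le_one (le_max_right _ _)
      linarith
    calc u n = u n / v n * v n := (div_mul_cancel₀ _ (hv n).ne').symm
      _ ≤ γ * v n := mul_le_mul_of_nonneg_right h2 (hv n).le
  · exact (hN n hn).trans
      (mul_le_mul_of_nonneg_right (le_trans (le_max_left β 1) (by rw [hγdef]; linarith)) (hv n).le)

lemma al_gap {al : ℕ → ℝ} {D : ℝ} (hD : ∀ n, al (n + 1) - al n ≤ D) (m n : ℕ) :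
    al (n + m) ≤ al n + m * D := by
  induction m with
  | zero => simp
  | succ m ih =>
    have h1 := hD (n + m)
    have h2 : al (n + (m + 1)) = al ((n + m) + 1) := by rw [show n + (m + 1) = (n + m) + 1 by omega]
    push_cast at ih ⊢
    linarith

lemma mul_exp_le_exp {γ x y : ℝ} (hγ : 0 < γ) (h : Real.log γ + x ≤ y) :
    γ * Real.exp x ≤ Real.exp y := by
  rw [← Real.exp_log hγ, ← Real.exp_add]
  exact Real.exp_le_exp.mpr h

lemma le_mul_exp_shift {c γ x y : ℝ} (h : c * Real.exp x ≤ γ * Real.exp y) :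
    c ≤ γ * Real.exp (y - x) := by
  calc c = c * Real.exp x * Real.exp (-x) := by
        rw [mul_assoc, ← Real.exp_add, add_neg_cancel, Real.exp_zero, mul_one]
    _ ≤ γ * Real.exp y * Real.exp (-x) :=
        mul_le_mul_of_nonneg_right h (Real.exp_pos _).le
    _ = γ * Real.exp (y - x) := by rw [mul_assoc, ← Real.exp_add, sub_eq_add_neg]

end Aux


/-- Proposition 4.1: characterizations of topologizability of `B_w` and `F_w` on the power
series spaces `Λ_∞(α)` and `Λ_0(α)`. The conditions of the form
`sup_m limsup_n (ln(…))/α_… < ∞` (resp. `≤ 0`) are stated in the equivalent exponentiated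
form, which incorporates the convention `ln 0 = -∞`. -/
theorem statement15 {𝕜 : Type*} [RCLike 𝕜] (al : ℕ → ℝ) (hal : IsExponentSeq al) (w : ℕ → 𝕜) :
    (ContinuousOnLambda (AInf al) L1 (Bshift w) →
      (TopologizableOnLambda (AInf al) L1 (Bshift w) ↔
        ∃ C : ℝ, ∀ m : ℕ, 1 ≤ m → ∀ᶠ n in atTop,
          (∏ j ∈ range m, ‖w (n + j)‖) ≤ Real.exp (C * al (n + m)))) ∧
    (ContinuousOnLambda (AInf al) L1 (Fshift w) →
      (TopologizableOnLambda (AInf al) L1 (Fshift w) ↔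
        ∀ k : ℕ, ∃ C : ℝ, ∀ m : ℕ, 1 ≤ m → ∀ᶠ n in atTop,
          (∏ j ∈ Icc 1 m, ‖w (n + j)‖) * Real.exp (k * al (n + m)) ≤ Real.exp (C * al n))) ∧
    (ContinuousOnLambda (AZero al) L1 (Bshift w) →
      ((TopologizableOnLambda (AZero al) L1 (Bshift w) →
          ∀ m : ℕ, 1 ≤ m → ∀ ε > (0 : ℝ), ∀ᶠ n in atTop,
            (∏ j ∈ range m, ‖w (n + j)‖) ≤ Real.exp (ε * al (n + m))) ∧
        ((∃ C : ℝ, ∀ n : ℕ, 1 ≤ n → al (n + 1) - al n ≤ C) →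
          (∀ m : ℕ, 1 ≤ m → ∀ ε > (0 : ℝ), ∀ᶠ n in atTop,
            (∏ j ∈ range m, ‖w (n + j)‖) ≤ Real.exp (ε * al (n + m))) →
          TopologizableOnLambda (AZero al) L1 (Bshift w)))) ∧
    (ContinuousOnLambda (AZero al) L1 (Fshift w) →
      (TopologizableOnLambda (AZero al) L1 (Fshift w) ↔
        ∀ m : ℕ, 1 ≤ m → ∀ ε > (0 : ℝ), ∀ᶠ n in atTop,
          (∏ j ∈ Icc 1 m, ‖w (n + j)‖) ≤ Real.exp (ε * al (n + m))))  := by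
  obtain ⟨hmono, hpos, htop⟩ := hal
  have haInf : ∀ n k, 0 ≤ AInf al n k := fun n k => (Real.exp_pos _).le
  have haZero : ∀ n k, 0 ≤ AZero al n k := fun n k => (Real.exp_pos _).le
  refine ⟨?_, ?_, ?_, ?_⟩
  · -- (i) B_w on Λ_∞
    intro _
    rw [core_B (AInf al) haInf w]
    constructor
    · intro h
      obtain ⟨l, hl⟩ := h 0
      refine ⟨(l : ℝ) + 1, fun m hm => ?_⟩
      obtain ⟨γ, hγ, hb⟩ := hl m hm
      filter_upwards [htop.eventually_ge_atTop (Real.log γ)] with n hn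
      have hb' := hb n
      simp only [AInf, Nat.cast_zero, zero_mul, Real.exp_zero, mul_one] at hb'
      have h2 : al n ≤ al (n + m) := hmono (Nat.le_add_right n m)
      calc (∏ j ∈ range m, ‖w (n + j)‖) ≤ γ * Real.exp ((l : ℝ) * al (n + m)) := hb'
        _ ≤ Real.exp (((l : ℝ) + 1) * al (n + m)) :=
            mul_exp_le_exp hγ (by ring_nf; linarith)
    · rintro ⟨C, hC⟩ k
      refine ⟨k + ⌈max C 0⌉₊, fun m hm => ?_⟩
      refine gamma_of_eventually _ _
        (fun n => mul_nonneg (Finset.prod_nonneg fun j _ => norm_nonneg _) (haInf n k))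
        (fun n => Real.exp_pos _) 1 ?_
      filter_upwards [hC m hm] with n hn
      simp only [AInf, one_mul]
      have h2 : al n ≤ al (n + m) := hmono (Nat.le_add_right n m)
      have h3 : 0 ≤ al (n + m) := hpos _
      have h4 : C ≤ (⌈max C 0⌉₊ : ℝ) := le_trans (le_max_left _ _) (Nat.le_ceil _)
      calc (∏ j ∈ range m, ‖w (n + j)‖) * Real.exp ((k : ℝ) * al n)
          ≤ Real.exp (C * al (n + m)) * Real.exp ((k : ℝ) * al n) :=
            mul_le_mul_of_nonneg_right hn (Real.exp_pos _).le
        _ = Real.exp (C * al (n + m) + (k : ℝ) * al n) := (Real.exp_add _ _).symm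
        _ ≤ Real.exp (((k + ⌈max C 0⌉₊ : ℕ) : ℝ) * al (n + m)) := by
            apply Real.exp_le_exp.mpr
            push_cast
            nlinarith [mul_le_mul_of_nonneg_left h2 (Nat.cast_nonneg k : (0:ℝ) ≤ (k:ℝ)),
              mul_le_mul_of_nonneg_right h4 h3]
  · -- (ii) F_w on Λ_∞
    intro _
    rw [core_F (AInf al) haInf w]
    constructor
    · intro h k
      obtain ⟨l, hl⟩ := h k
      refine ⟨(l : ℝ) + 1, fun m hm => ?_⟩
      obtain ⟨γ, hγ, hb⟩ := hl m hm
      filter_upwards [htop.eventually_ge_atTop (Real.log γ)] with n hn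
      have hb' := hb n
      simp only [AInf] at hb'
      calc (∏ j ∈ Icc 1 m, ‖w (n + j)‖) * Real.exp ((k : ℝ) * al (n + m))
          ≤ γ * Real.exp ((l : ℝ) * al n) := hb'
        _ ≤ Real.exp (((l : ℝ) + 1) * al n) := mul_exp_le_exp hγ (by ring_nf; linarith)
    · intro h k
      obtain ⟨C, hC⟩ := h k
      refine ⟨⌈max C 0⌉₊, fun m hm => ?_⟩
      refine gamma_of_eventually _ _
        (fun n => mul_nonneg (Finset.prod_nonneg fun j _ => norm_nonneg _) (haInf _ k))
        (fun n => Real.exp_pos _) 1 ?_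
      filter_upwards [hC m hm] with n hn
      simp only [AInf, one_mul]
      have h4 : C ≤ (⌈max C 0⌉₊ : ℝ) := le_trans (le_max_left _ _) (Nat.le_ceil _)
      have h5 : 0 ≤ al n := hpos _
      calc (∏ j ∈ Icc 1 m, ‖w (n + j)‖) * Real.exp ((k : ℝ) * al (n + m))
          ≤ Real.exp (C * al n) := hn
        _ ≤ Real.exp ((⌈max C 0⌉₊ : ℝ) * al n) := Real.exp_le_exp.mpr
            (by nlinarith [mul_le_mul_of_nonneg_right h4 h5])
  · -- (iii) B_w on Λ_0
    intro _
    constructor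
    · intro h m hm ε hε
      have h' := (core_B (AZero al) haZero w).mp h
      have h2ε : (0:ℝ) < 2 / ε := by positivity
      set k := ⌈2 / ε⌉₊ with hkdef
      have hkk : 2 / ε ≤ (k : ℝ) + 1 := (Nat.le_ceil _).trans (by linarith)
      have hk1 : 1 / ((k : ℝ) + 1) ≤ ε / 2 := by
        have := one_div_le_one_div_of_le h2ε hkk
        rwa [one_div_div] at this
      obtain ⟨l, hl⟩ := h' k
      obtain ⟨γ, hγ, hb⟩ := hl m hm
      filter_upwards [htop.eventually_ge_atTop (Real.log γ / (ε / 2))] with n hn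
      have hb' := hb n
      simp only [AZero] at hb'
      have hc := le_mul_exp_shift hb'
      refine hc.trans (mul_exp_le_exp hγ ?_)
      have h1 : Real.log γ ≤ al n * (ε / 2) := (div_le_iff₀ (by positivity)).mp hn
      have hAn : al n ≤ al (n + m) := hmono (Nat.le_add_right n m)
      have h5 : 0 ≤ al n := hpos _
      have h3 : al n / ((k : ℝ) + 1) ≤ ε / 2 * al n := by
        rw [div_eq_mul_one_div, mul_comm]
        exact mul_le_mul_of_nonneg_right hk1 h5
      have h6 : 0 ≤ al (n + m) / ((l : ℝ) + 1) := div_nonneg (hpos _) (by positivity)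
      have h7 : ε / 2 * al n ≤ ε / 2 * al (n + m) :=
        mul_le_mul_of_nonneg_left hAn (by positivity)
      have hnd : -al (n + m) / ((l : ℝ) + 1) = -(al (n + m) / ((l : ℝ) + 1)) := neg_div _ _
      have hnd2 : -al n / ((k : ℝ) + 1) = -(al n / ((k : ℝ) + 1)) := neg_div _ _
      rw [hnd, hnd2]
      linarith
    · rintro ⟨Cg, hCg⟩ hsm
      rw [core_B (AZero al) haZero w]
      intro k
      refine ⟨2 * k + 1, fun m hm => ?_⟩
      set D := max Cg (al 1 - al 0) with hDdef
      have hD : ∀ n, al (n + 1) - al n ≤ D := by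
        intro n
        rcases Nat.eq_zero_or_pos n with h0 | h0
        · subst h0
          have h1 : al 1 - al 0 ≤ D := le_max_right _ _
          simpa using h1
        · exact le_trans (hCg n h0) (le_max_left _ _)
      have hK : (0:ℝ) < (k : ℝ) + 1 := by positivity
      refine gamma_of_eventually _ _
        (fun n => mul_nonneg (Finset.prod_nonneg fun j _ => norm_nonneg _) (haZero n k))
        (fun n => Real.exp_pos _) (Real.exp ((m : ℝ) * D / ((k : ℝ) + 1))) ?_
      filter_upwards [hsm m hm (1 / (2 * ((k : ℝ) + 1))) (by positivity)] with n hn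
      simp only [AZero]
      have hgap : al (n + m) ≤ al n + (m : ℝ) * D := al_gap hD m n
      have hcast : ((2 * k + 1 : ℕ) : ℝ) + 1 = 2 * ((k : ℝ) + 1) := by push_cast; ring
      rw [hcast, ← Real.exp_add]
      have key : (al (n + m) - al n) / ((k : ℝ) + 1) ≤ ((m : ℝ) * D) / ((k : ℝ) + 1) :=
        (div_le_div_iff_of_pos_right hK).mpr (by linarith)
      have hsub : (al (n + m) - al n) / ((k : ℝ) + 1)
          = al (n + m) / ((k : ℝ) + 1) - al n / ((k : ℝ) + 1) := sub_div _ _ _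
      have hsplit : 1 / (2 * ((k : ℝ) + 1)) * al (n + m) + al (n + m) / (2 * ((k : ℝ) + 1))
          = al (n + m) / ((k : ℝ) + 1) := by
        field_simp
        ring
      calc (∏ j ∈ range m, ‖w (n + j)‖) * Real.exp (-al n / ((k : ℝ) + 1))
          ≤ Real.exp (1 / (2 * ((k : ℝ) + 1)) * al (n + m)) * Real.exp (-al n / ((k : ℝ) + 1)) :=
            mul_le_mul_of_nonneg_right hn (Real.exp_pos _).le
        _ = Real.exp (1 / (2 * ((k : ℝ) + 1)) * al (n + m) + -al n / ((k : ℝ) + 1)) :=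
            (Real.exp_add _ _).symm
        _ ≤ Real.exp ((m : ℝ) * D / ((k : ℝ) + 1) + -al (n + m) / (2 * ((k : ℝ) + 1))) := by
            apply Real.exp_le_exp.mpr
            have hnd : -al n / ((k : ℝ) + 1) = -(al n / ((k : ℝ) + 1)) := neg_div _ _
            have hnd2 : -al (n + m) / (2 * ((k : ℝ) + 1))
                = -(al (n + m) / (2 * ((k : ℝ) + 1))) := neg_div _ _
            rw [hnd, hnd2]
            linarith
  · -- (iv) F_w on Λ_0
    intro _
    rw [core_F (AZero al) haZero w]
    constructor
    · intro h m hm ε hε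
      have h2ε : (0:ℝ) < 2 / ε := by positivity
      set k := ⌈2 / ε⌉₊ with hkdef
      have hkk : 2 / ε ≤ (k : ℝ) + 1 := (Nat.le_ceil _).trans (by linarith)
      have hk1 : 1 / ((k : ℝ) + 1) ≤ ε / 2 := by
        have := one_div_le_one_div_of_le h2ε hkk
        rwa [one_div_div] at this
      obtain ⟨l, hl⟩ := h k
      obtain ⟨γ, hγ, hb⟩ := hl m hm
      filter_upwards [htop.eventually_ge_atTop (Real.log γ / (ε / 2))] with n hn
      have hb' := hb n
      simp only [AZero] at hb'
      have hc := le_mul_exp_shift hb'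
      refine hc.trans (mul_exp_le_exp hγ ?_)
      have h1 : Real.log γ ≤ al n * (ε / 2) := (div_le_iff₀ (by positivity)).mp hn
      have hAn : al n ≤ al (n + m) := hmono (Nat.le_add_right n m)
      have h5 : 0 ≤ al (n + m) := hpos _
      have h3 : al (n + m) / ((k : ℝ) + 1) ≤ ε / 2 * al (n + m) := by
        rw [div_eq_mul_one_div, mul_comm]
        exact mul_le_mul_of_nonneg_right hk1 h5
      have h6 : 0 ≤ al n / ((l : ℝ) + 1) := div_nonneg (hpos _) (by positivity)
      have h7 : ε / 2 * al n ≤ ε / 2 * al (n + m) :=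
        mul_le_mul_of_nonneg_left hAn (by positivity)
      have hnd : -al n / ((l : ℝ) + 1) = -(al n / ((l : ℝ) + 1)) := neg_div _ _
      have hnd2 : -al (n + m) / ((k : ℝ) + 1) = -(al (n + m) / ((k : ℝ) + 1)) := neg_div _ _
      rw [hnd, hnd2]
      linarith
    · intro h k
      refine ⟨2 * k + 1, fun m hm => ?_⟩
      have hK : (0:ℝ) < (k : ℝ) + 1 := by positivity
      refine gamma_of_eventually _ _
        (fun n => mul_nonneg (Finset.prod_nonneg fun j _ => norm_nonneg _) (haZero _ k))
        (fun n => Real.exp_pos _) 1 ?_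
      filter_upwards [h m hm (1 / (2 * ((k : ℝ) + 1))) (by positivity)] with n hn
      simp only [AZero, one_mul]
      have hcast : ((2 * k + 1 : ℕ) : ℝ) + 1 = 2 * ((k : ℝ) + 1) := by push_cast; ring
      rw [hcast]
      have hAn : al n ≤ al (n + m) := hmono (Nat.le_add_right n m)
      have hsplit : 1 / (2 * ((k : ℝ) + 1)) * al (n + m) + -al (n + m) / ((k : ℝ) + 1)
          = -al (n + m) / (2 * ((k : ℝ) + 1)) := by
        field_simp
        ring
      have hmono2 : -al (n + m) / (2 * ((k : ℝ) + 1)) ≤ -al n / (2 * ((k : ℝ) + 1)) :=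
        (div_le_div_iff_of_pos_right (by positivity)).mpr (by linarith)
      calc (∏ j ∈ Icc 1 m, ‖w (n + j)‖) * Real.exp (-al (n + m) / ((k : ℝ) + 1))
          ≤ Real.exp (1 / (2 * ((k : ℝ) + 1)) * al (n + m))
              * Real.exp (-al (n + m) / ((k : ℝ) + 1)) :=
            mul_le_mul_of_nonneg_right hn (Real.exp_pos _).le
        _ = Real.exp (1 / (2 * ((k : ℝ) + 1)) * al (n + m) + -al (n + m) / ((k : ℝ) + 1)) :=
            (Real.exp_add _ _).symm
        _ ≤ Real.exp (-al n / (2 * ((k : ℝ) + 1))) := Real.exp_le_exp.mpr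
            (by rw [hsplit]; exact hmono2)
end
end

section
/- Let α = (α_n)_{n∈ℕ₀} be an exponent sequence with α_0 > 0 and w ∈ 𝕂^{ℕ₀}. Then: (i) if B_w is continuous on Λ_∞(α), then B_w is power bounded on Λ_∞(α) if and only if sup_{n∈ℕ₀, m∈ℕ} ln(∏_{j=0}^{m−1} |w_{n+j}|) / α_{n+m} < ∞; (ii) if F_w is continuous on Λ_∞(α), then F_w is power bounded on Λ_∞(α) if and only if for every k ∈ ℕ₀ one has sup_{n∈ℕ₀, m∈ℕ} ( ln(∏_{j=1}^{m} |w_{n+j}|) + k α_{n+m} ) / α_n < ∞; (iii) if B_w is continuous on Λ_0(α), then B_w is power bounded on Λ_0(α) if and only if for every k ∈ ℕ₀ one has limsup_{n+m→∞} ( ln(∏_{j=0}^{m−1} |w_{n+j}|) − α_n/(k+1) ) / α_{n+m} < 0; (iv) if F_w is continuous on Λ_0(α), then F_w is power bounded on Λ_0(α) if and only if limsup_{n+m→∞} ln(∏_{j=1}^{m} |w_{n+j}|) / α_{n+m} ≤ 0. Here, for a double array (A_{n,m})_{n∈ℕ₀,m∈ℕ} of extended reals, limsup_{n+m→∞} A_{n,m}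 := inf_{N∈ℕ} sup{ A_{n,m} : n + m ≥ N }. -/
open Filter Finset
open scoped ENNReal

noncomputable section

variable {𝕜 : Type*} [RCLike 𝕜]

section Helpers

variable {𝕜 : Type*} [RCLike 𝕜]

/-- Standard unit vector. -/
def eVec (p : ℕ) : ℕ → 𝕜 := fun n => if n = p then 1 else 0

lemma mem_iff (a : ℕ → ℕ → ℝ) (x : ℕ → 𝕜) :
    MemLambda a L1 x ↔ ∀ k, Summable fun n => ‖x n‖ * a n k := by
  show (∀ k, Summable fun n => (‖x n‖ * a n k) ^ (1 : ℝ)) ↔ _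
  simp [Real.rpow_one]

lemma mem_eVec (a : ℕ → ℕ → ℝ) (p : ℕ) : MemLambda a L1 (eVec p : ℕ → 𝕜) := by
  rw [mem_iff]
  intro k
  apply summable_of_ne_finset_zero (s := {p})
  intro n hn
  simp only [Finset.mem_singleton] at hn
  simp [eVec, hn]

lemma sem_eVec (a : ℕ → ℕ → ℝ) (k p : ℕ) :
    lambdaSeminorm a L1 k (eVec p : ℕ → 𝕜) = a p k := by
  rw [sem_eq, tsum_eq_single p]
  · simp [eVec]
  · intro n hn; simp [eVec, hn]

lemma B_iter (w : ℕ → 𝕜) (x : ℕ → 𝕜) :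
    ∀ m n, (Bshift w)^[m] x n = (∏ j ∈ range m, w (n + j)) * x (n + m) := by
  intro m
  induction m with
  | zero => intro n; simp
  | succ m ih =>
    intro n
    rw [Function.iterate_succ_apply']
    show w n * ((Bshift w)^[m] x (n + 1)) = _
    rw [ih (n + 1), prod_range_succ']
    have h4 : (∏ j ∈ range m, w (n + (j + 1))) = ∏ j ∈ range m, w (n + 1 + j) :=
      Finset.prod_congr rfl fun j _ => by rw [show n + (j + 1) = n + 1 + j by omega]
    rw [h4, show n + 1 + m = n + (m + 1) by omega, add_zero]
    ring

lemma F_iter_zero (w : ℕ → 𝕜) (x : ℕ → 𝕜) :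
    ∀ m n, n < m → (Fshift w)^[m] x n = 0 := by
  intro m
  induction m with
  | zero => intro n hn; omega
  | succ m ih =>
    intro n hn
    rw [Function.iterate_succ_apply']
    show (if n = 0 then 0 else w n * ((Fshift w)^[m] x (n - 1))) = 0
    rcases Nat.eq_zero_or_pos n with h | h
    · simp [h]
    · have hn' : n - 1 < m := by omega
      rw [if_neg (by omega), ih _ hn', mul_zero]

lemma F_iter (w : ℕ → 𝕜) (x : ℕ → 𝕜) :
    ∀ m n, (Fshift w)^[m] x (n + m) = (∏ j ∈ Icc 1 m, w (n + j)) * x n := by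
  intro m
  induction m with
  | zero => intro n; simp
  | succ m ih =>
    intro n
    rw [Function.iterate_succ_apply']
    show (if n + (m + 1) = 0 then 0
        else w (n + (m + 1)) * ((Fshift w)^[m] x (n + (m + 1) - 1))) = _
    rw [if_neg (by omega)]
    have h3 : n + (m + 1) - 1 = n + m := by omega
    rw [h3, ih n, Finset.prod_Icc_succ_top (by omega)]
    ring

lemma pb_B_iff (a : ℕ → ℕ → ℝ) (hpos : ∀ n k, 0 < a n k) (w : ℕ → 𝕜) :
    PowerBoundedOnLambda a L1 (Bshift w) ↔
      ∀ k, ∃ l, ∃ C > 0, ∀ m : ℕ, 1 ≤ m → ∀ n,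
        (∏ j ∈ range m, ‖w (n + j)‖) * a n k ≤ C * a (n + m) l := by
  constructor
  · intro h k
    obtain ⟨l, C, hC, hPB⟩ := h k
    refine ⟨l, C, hC, fun m hm n => ?_⟩
    have key := hPB m hm (eVec (n + m)) (mem_eVec a (n + m))
    rw [sem_eVec] at key
    rw [sem_eq] at key
    rw [tsum_eq_single n ?side] at key
    · rw [B_iter] at key
      simpa [eVec, norm_prod] using key
    · intro n' hn'
      rw [B_iter]
      have : (eVec (n + m) : ℕ → 𝕜) (n' + m) = 0 := by
        simp only [eVec, ite_eq_right_iff]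
        intro h'; omega
      simp [this]
  · intro h k
    obtain ⟨l, C, hC, hcond⟩ := h k
    refine ⟨l, C, hC, fun m hm x hx => ?_⟩
    have hx' : Summable fun n => ‖x n‖ * a n l := (mem_iff a x).1 hx l
    rw [sem_eq, sem_eq]
    have hsh : Summable fun n => ‖x (n + m)‖ * a (n + m) l :=
      hx'.comp_injective (add_left_injective m)
    have hg : Summable fun n => C * (‖x (n + m)‖ * a (n + m) l) := hsh.mul_left C
    have hfg : ∀ n, ‖(Bshift w)^[m] x n‖ * a n k ≤ C * (‖x (n + m)‖ * a (n + m) l) := by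
      intro n
      rw [B_iter, norm_mul, norm_prod]
      have := mul_le_mul_of_nonneg_right (hcond m hm n) (norm_nonneg (x (n + m)))
      calc (∏ j ∈ range m, ‖w (n + j)‖) * ‖x (n + m)‖ * a n k
          = ((∏ j ∈ range m, ‖w (n + j)‖) * a n k) * ‖x (n + m)‖ := by ring
        _ ≤ (C * a (n + m) l) * ‖x (n + m)‖ := this
        _ = C * (‖x (n + m)‖ * a (n + m) l) := by ring
    have hf : Summable fun n => ‖(Bshift w)^[m] x n‖ * a n k :=
      Summable.of_nonneg_of_le
        (fun n => mul_nonneg (norm_nonneg _) (hpos n k).le) hfg hg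
    calc ∑' n, ‖(Bshift w)^[m] x n‖ * a n k
        ≤ ∑' n, C * (‖x (n + m)‖ * a (n + m) l) := Summable.tsum_le_tsum hfg hf hg
      _ = C * ∑' n, ‖x (n + m)‖ * a (n + m) l := tsum_mul_left
      _ ≤ C * ∑' n, ‖x n‖ * a n l := by
          apply mul_le_mul_of_nonneg_left _ hC.le
          exact Summable.tsum_le_tsum_of_inj (· + m) (add_left_injective m)
            (fun c _ => mul_nonneg (norm_nonneg _) (hpos c l).le)
            (fun n => le_rfl) hsh hx'

lemma F_sem (a : ℕ → ℕ → ℝ) (k : ℕ) (w : ℕ → 𝕜) (m : ℕ) (x : ℕ → 𝕜) :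
    lambdaSeminorm a L1 k ((Fshift w)^[m] x) =
      ∑' n, (∏ j ∈ Icc 1 m, ‖w (n + j)‖) * ‖x n‖ * a (n + m) k := by
  rw [sem_eq]
  rw [← Function.Injective.tsum_eq (g := (· + m))
    (f := fun n => ‖(Fshift w)^[m] x n‖ * a n k) (add_left_injective m) ?supp]
  · apply tsum_congr
    intro n
    rw [F_iter, norm_mul, norm_prod]
  · intro p hp
    simp only [Function.mem_support, ne_eq] at hp
    rcases lt_or_ge p m with h | h
    · exact absurd (by rw [F_iter_zero w x m p h]; simp) hp
    · exact ⟨p - m, show p - m + m = p by omega⟩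

lemma pb_F_iff (a : ℕ → ℕ → ℝ) (hpos : ∀ n k, 0 < a n k) (w : ℕ → 𝕜) :
    PowerBoundedOnLambda a L1 (Fshift w) ↔
      ∀ k, ∃ l, ∃ C > 0, ∀ m : ℕ, 1 ≤ m → ∀ n,
        (∏ j ∈ Icc 1 m, ‖w (n + j)‖) * a (n + m) k ≤ C * a n l := by
  constructor
  · intro h k
    obtain ⟨l, C, hC, hPB⟩ := h k
    refine ⟨l, C, hC, fun m hm n => ?_⟩
    have key := hPB m hm (eVec n) (mem_eVec a n)
    rw [sem_eVec, F_sem] at key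
    rw [tsum_eq_single n ?side] at key
    · simpa [eVec] using key
    · intro n' hn'
      have : (eVec n : ℕ → 𝕜) n' = 0 := by simp [eVec, hn']
      simp [this]
  · intro h k
    obtain ⟨l, C, hC, hcond⟩ := h k
    refine ⟨l, C, hC, fun m hm x hx => ?_⟩
    have hx' : Summable fun n => ‖x n‖ * a n l := (mem_iff a x).1 hx l
    rw [F_sem, sem_eq]
    have hg : Summable fun n => C * (‖x n‖ * a n l) := hx'.mul_left C
    have hfg : ∀ n, (∏ j ∈ Icc 1 m, ‖w (n + j)‖) * ‖x n‖ * a (n + m) k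
        ≤ C * (‖x n‖ * a n l) := by
      intro n
      have := mul_le_mul_of_nonneg_right (hcond m hm n) (norm_nonneg (x n))
      calc (∏ j ∈ Icc 1 m, ‖w (n + j)‖) * ‖x n‖ * a (n + m) k
          = ((∏ j ∈ Icc 1 m, ‖w (n + j)‖) * a (n + m) k) * ‖x n‖ := by ring
        _ ≤ (C * a n l) * ‖x n‖ := this
        _ = C * (‖x n‖ * a n l) := by ring
    have hf : Summable fun n => (∏ j ∈ Icc 1 m, ‖w (n + j)‖) * ‖x n‖ * a (n + m) k :=
      Summable.of_nonneg_of_le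
        (fun n => mul_nonneg (mul_nonneg (Finset.prod_nonneg fun _ _ => norm_nonneg _)
          (norm_nonneg _)) (hpos _ k).le) hfg hg
    calc ∑' n, (∏ j ∈ Icc 1 m, ‖w (n + j)‖) * ‖x n‖ * a (n + m) k
        ≤ ∑' n, C * (‖x n‖ * a n l) := Summable.tsum_le_tsum hfg hf hg
      _ = C * ∑' n, ‖x n‖ * a n l := tsum_mul_left

lemma one_le_prodR {s : Finset ℕ} {f : ℕ → ℝ} (hf : ∀ i, 1 ≤ f i) : (1 : ℝ) ≤ ∏ i ∈ s, f i :=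
  calc (1 : ℝ) = ∏ _i ∈ s, 1 := by simp
    _ ≤ ∏ i ∈ s, f i := Finset.prod_le_prod (fun _ _ => zero_le_one) (fun i _ => hf i)

lemma prod_subsetR {s t : Finset ℕ} (h : s ⊆ t) {f : ℕ → ℝ} (hf : ∀ i, 1 ≤ f i) :
    ∏ i ∈ s, f i ≤ ∏ i ∈ t, f i := by
  rw [← Finset.prod_sdiff h]
  have h0 : 0 ≤ ∏ i ∈ s, f i := Finset.prod_nonneg fun i _ => zero_le_one.trans (hf i)
  calc ∏ i ∈ s, f i = 1 * ∏ i ∈ s, f i := (one_mul _).symm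
    _ ≤ (∏ i ∈ t \ s, f i) * ∏ i ∈ s, f i :=
        mul_le_mul_of_nonneg_right (one_le_prodR hf) h0

lemma prod_le_W (w : ℕ → 𝕜) (N : ℕ) (n m : ℕ) (h : n + m ≤ N) :
    (∏ j ∈ range m, ‖w (n + j)‖) ≤ ∏ j ∈ range N, max 1 ‖w j‖ := by
  calc (∏ j ∈ range m, ‖w (n + j)‖)
      ≤ ∏ j ∈ range m, max 1 ‖w (n + j)‖ :=
        Finset.prod_le_prod (fun _ _ => norm_nonneg _) (fun _ _ => le_max_right _ _)
    _ = ∏ i ∈ Ico n (n + m), max 1 ‖w i‖ := by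
        rw [Finset.prod_Ico_eq_prod_range]
        simp
    _ ≤ ∏ j ∈ range N, max 1 ‖w j‖ := by
        apply prod_subsetR _ (fun i => le_max_left _ _)
        intro i hi
        simp only [Finset.mem_Ico] at hi
        simp only [Finset.mem_range]
        omega

lemma prodIcc_le_W (w : ℕ → 𝕜) (N : ℕ) (n m : ℕ) (h : n + m ≤ N) :
    (∏ j ∈ Icc 1 m, ‖w (n + j)‖) ≤ ∏ j ∈ range (N + 1), max 1 ‖w j‖ := by
  calc (∏ j ∈ Icc 1 m, ‖w (n + j)‖)
      ≤ ∏ j ∈ Icc 1 m, max 1 ‖w (n + j)‖ :=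
        Finset.prod_le_prod (fun _ _ => norm_nonneg _) (fun _ _ => le_max_right _ _)
    _ = ∏ i ∈ Ico (n + 1) (n + m + 1), max 1 ‖w i‖ := by
        rw [← Finset.Ico_add_one_right_eq_Icc, Finset.prod_Ico_eq_prod_range,
          Finset.prod_Ico_eq_prod_range]
        have h1 : m + 1 - 1 = m := by omega
        have h2 : n + m + 1 - (n + 1) = m := by omega
        rw [h1, h2]
        exact Finset.prod_congr rfl fun i _ => by rw [show n + (1 + i) = n + 1 + i by omega]
    _ ≤ ∏ j ∈ range (N + 1), max 1 ‖w j‖ := by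
        apply prod_subsetR _ (fun i => le_max_left _ _)
        intro i hi
        simp only [Finset.mem_Ico] at hi
        simp only [Finset.mem_range]
        omega

lemma one_le_W (w : ℕ → 𝕜) (N : ℕ) : 1 ≤ ∏ j ∈ range N, max 1 ‖w j‖ :=
  one_le_prodR fun _ => le_max_left _ _

end Helpers

/-- Proposition 4.2: characterizations of power boundedness of `B_w` and `F_w` on the power
series spaces `Λ_∞(α)` and `Λ_0(α)` (with `α_0 > 0`). The conditions of the form
`sup (ln(…))/α_… < ∞`, `limsup_{n+m→∞} … < 0` and `limsup_{n+m→∞} … ≤ 0` are stated in the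
equivalent exponentiated form, which incorporates the convention `ln 0 = -∞`. -/
theorem statement16 {𝕜 : Type*} [RCLike 𝕜] (al : ℕ → ℝ) (hal : IsExponentSeq al)
    (hal0 : 0 < al 0) (w : ℕ → 𝕜) :
    (ContinuousOnLambda (AInf al) L1 (Bshift w) →
      (PowerBoundedOnLambda (AInf al) L1 (Bshift w) ↔
        ∃ C : ℝ, ∀ n m : ℕ, 1 ≤ m →
          (∏ j ∈ range m, ‖w (n + j)‖) ≤ Real.exp (C * al (n + m)))) ∧
    (ContinuousOnLambda (AInf al) L1 (Fshift w) →
      (PowerBoundedOnLambda (AInf al) L1 (Fshift w) ↔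
        ∀ k : ℕ, ∃ C : ℝ, ∀ n m : ℕ, 1 ≤ m →
          (∏ j ∈ Icc 1 m, ‖w (n + j)‖) * Real.exp (k * al (n + m)) ≤ Real.exp (C * al n))) ∧
    (ContinuousOnLambda (AZero al) L1 (Bshift w) →
      (PowerBoundedOnLambda (AZero al) L1 (Bshift w) ↔
        ∀ k : ℕ, ∃ δ > (0 : ℝ), ∃ N : ℕ, ∀ n m : ℕ, 1 ≤ m → N ≤ n + m →
          (∏ j ∈ range m, ‖w (n + j)‖) ≤ Real.exp (al n / (k + 1) - δ * al (n + m)))) ∧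
    (ContinuousOnLambda (AZero al) L1 (Fshift w) →
      (PowerBoundedOnLambda (AZero al) L1 (Fshift w) ↔
        ∀ ε > (0 : ℝ), ∃ N : ℕ, ∀ n m : ℕ, 1 ≤ m → N ≤ n + m →
          (∏ j ∈ Icc 1 m, ‖w (n + j)‖) ≤ Real.exp (ε * al (n + m)))) := by
  obtain ⟨hmono, hnn, htop⟩ := hal
  have hposInf : ∀ n k, 0 < AInf al n k := fun n k => Real.exp_pos _
  have hposZ : ∀ n k, 0 < AZero al n k := fun n k => Real.exp_pos _
  refine ⟨fun _ => ?_, fun _ => ?_, fun _ => ?_, fun _ => ?_⟩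
  -- Part (i): B_w on Λ_∞(α)
  · rw [pb_B_iff _ hposInf]
    constructor
    · intro h
      obtain ⟨l, C, hC, hcond⟩ := h 0
      set M := max 0 (Real.log C) with hMdef
      have hMnn : 0 ≤ M := le_max_left _ _
      have hal1 : 0 < al 1 := lt_of_lt_of_le hal0 (hmono (by omega))
      refine ⟨(l : ℝ) + M / al 1, fun n m hm => ?_⟩
      have h1 := hcond m hm n
      simp only [AInf, Nat.cast_zero, zero_mul, Real.exp_zero, mul_one] at h1
      have hA : al 1 ≤ al (n + m) := hmono (by omega)
      have hCe : C ≤ Real.exp M :=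
        calc C = Real.exp (Real.log C) := (Real.exp_log hC).symm
          _ ≤ Real.exp M := Real.exp_le_exp.2 (le_max_right _ _)
      have key : M + (l : ℝ) * al (n + m) ≤ ((l : ℝ) + M / al 1) * al (n + m) := by
        have h2 : M / al 1 * al 1 = M := div_mul_cancel₀ M hal1.ne'
        have h3 := mul_le_mul_of_nonneg_left hA (div_nonneg hMnn hal1.le)
        nlinarith
      calc (∏ j ∈ range m, ‖w (n + j)‖)
          ≤ C * Real.exp ((l : ℝ) * al (n + m)) := h1
        _ ≤ Real.exp M * Real.exp ((l : ℝ) * al (n + m)) :=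
            mul_le_mul_of_nonneg_right hCe (Real.exp_pos _).le
        _ = Real.exp (M + (l : ℝ) * al (n + m)) := (Real.exp_add _ _).symm
        _ ≤ Real.exp (((l : ℝ) + M / al 1) * al (n + m)) := Real.exp_le_exp.2 key
    · rintro ⟨C, hC⟩ k
      refine ⟨k + ⌈max C 0⌉₊, 1, one_pos, fun m hm n => ?_⟩
      have h1 := hC n m hm
      have hCle : C ≤ (⌈max C 0⌉₊ : ℝ) := (le_max_left C 0).trans (Nat.le_ceil _)
      have hmn : al n ≤ al (n + m) := hmono (by omega)
      have key : C * al (n + m) + (k : ℝ) * al n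
          ≤ ((k + ⌈max C 0⌉₊ : ℕ) : ℝ) * al (n + m) := by
        push_cast
        have h0 : 0 ≤ al (n + m) := hnn _
        have h4 : (0 : ℝ) ≤ (k : ℝ) := Nat.cast_nonneg k
        nlinarith
      simp only [AInf]
      calc (∏ j ∈ range m, ‖w (n + j)‖) * Real.exp ((k : ℝ) * al n)
          ≤ Real.exp (C * al (n + m)) * Real.exp ((k : ℝ) * al n) :=
            mul_le_mul_of_nonneg_right h1 (Real.exp_pos _).le
        _ = Real.exp (C * al (n + m) + (k : ℝ) * al n) := (Real.exp_add _ _).symm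
        _ ≤ Real.exp (((k + ⌈max C 0⌉₊ : ℕ) : ℝ) * al (n + m)) := Real.exp_le_exp.2 key
        _ = 1 * Real.exp (((k + ⌈max C 0⌉₊ : ℕ) : ℝ) * al (n + m)) := (one_mul _).symm
  -- Part (ii): F_w on Λ_∞(α)
  · rw [pb_F_iff _ hposInf]
    constructor
    · intro h k
      obtain ⟨l, C, hC, hcond⟩ := h k
      set M := max 0 (Real.log C) with hMdef
      have hMnn : 0 ≤ M := le_max_left _ _
      refine ⟨(l : ℝ) + M / al 0, fun n m hm => ?_⟩
      have h1 := hcond m hm n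
      simp only [AInf] at h1
      have hA : al 0 ≤ al n := hmono (by omega)
      have hCe : C ≤ Real.exp M :=
        calc C = Real.exp (Real.log C) := (Real.exp_log hC).symm
          _ ≤ Real.exp M := Real.exp_le_exp.2 (le_max_right _ _)
      have key : M + (l : ℝ) * al n ≤ ((l : ℝ) + M / al 0) * al n := by
        have h2 : M / al 0 * al 0 = M := div_mul_cancel₀ M hal0.ne'
        have h3 := mul_le_mul_of_nonneg_left hA (div_nonneg hMnn hal0.le)
        nlinarith
      calc (∏ j ∈ Icc 1 m, ‖w (n + j)‖) * Real.exp ((k : ℝ) * al (n + m))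
          ≤ C * Real.exp ((l : ℝ) * al n) := h1
        _ ≤ Real.exp M * Real.exp ((l : ℝ) * al n) :=
            mul_le_mul_of_nonneg_right hCe (Real.exp_pos _).le
        _ = Real.exp (M + (l : ℝ) * al n) := (Real.exp_add _ _).symm
        _ ≤ Real.exp (((l : ℝ) + M / al 0) * al n) := Real.exp_le_exp.2 key
    · intro h k
      obtain ⟨C, hC⟩ := h k
      refine ⟨⌈max C 0⌉₊, 1, one_pos, fun m hm n => ?_⟩
      have h1 := hC n m hm
      have hCle : C ≤ (⌈max C 0⌉₊ : ℝ) := (le_max_left C 0).trans (Nat.le_ceil _)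
      have key : C * al n ≤ (⌈max C 0⌉₊ : ℝ) * al n :=
        mul_le_mul_of_nonneg_right hCle (hnn n)
      simp only [AInf]
      calc (∏ j ∈ Icc 1 m, ‖w (n + j)‖) * Real.exp ((k : ℝ) * al (n + m))
          ≤ Real.exp (C * al n) := h1
        _ ≤ Real.exp ((⌈max C 0⌉₊ : ℝ) * al n) := Real.exp_le_exp.2 key
        _ = 1 * Real.exp ((⌈max C 0⌉₊ : ℝ) * al n) := (one_mul _).symm
  -- Part (iii): B_w on Λ_0(α)
  · rw [pb_B_iff _ hposZ]
    constructor
    · intro h k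
      obtain ⟨l, C, hC, hcond⟩ := h k
      set δ : ℝ := 1 / (2 * ((l : ℝ) + 1)) with hδdef
      have hl1 : (0 : ℝ) < (l : ℝ) + 1 := by positivity
      have hδpos : 0 < δ := by positivity
      obtain ⟨N, hN⟩ :=
        eventually_atTop.1 (htop.eventually_ge_atTop (max 0 (Real.log C) / δ))
      refine ⟨δ, hδpos, N, fun n m hm hNnm => ?_⟩
      have h1 := hcond m hm n
      simp only [AZero] at h1
      have hCle : C ≤ Real.exp (δ * al (n + m)) := by
        have h2 : max 0 (Real.log C) / δ ≤ al (n + m) := hN (n + m) hNnm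
        have h3 : max 0 (Real.log C) ≤ δ * al (n + m) := by
          rw [div_le_iff₀ hδpos] at h2
          linarith [h2]
        calc C = Real.exp (Real.log C) := (Real.exp_log hC).symm
          _ ≤ Real.exp (δ * al (n + m)) :=
              Real.exp_le_exp.2 ((le_max_right _ _).trans h3)
      calc (∏ j ∈ range m, ‖w (n + j)‖)
          = (∏ j ∈ range m, ‖w (n + j)‖) * Real.exp (-al n / ((k : ℝ) + 1)) *
              Real.exp (al n / ((k : ℝ) + 1)) := by
            rw [mul_assoc, ← Real.exp_add,
              show -al n / ((k : ℝ) + 1) + al n / ((k : ℝ) + 1) = 0 by ring,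
              Real.exp_zero, mul_one]
        _ ≤ C * Real.exp (-al (n + m) / ((l : ℝ) + 1)) * Real.exp (al n / ((k : ℝ) + 1)) :=
            mul_le_mul_of_nonneg_right h1 (Real.exp_pos _).le
        _ ≤ Real.exp (δ * al (n + m)) * Real.exp (-al (n + m) / ((l : ℝ) + 1)) *
              Real.exp (al n / ((k : ℝ) + 1)) :=
            mul_le_mul_of_nonneg_right
              (mul_le_mul_of_nonneg_right hCle (Real.exp_pos _).le) (Real.exp_pos _).le
        _ = Real.exp (δ * al (n + m) + -al (n + m) / ((l : ℝ) + 1) + al n / ((k : ℝ) + 1)) := by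
            rw [← Real.exp_add, ← Real.exp_add]
        _ = Real.exp (al n / ((k : ℝ) + 1) - δ * al (n + m)) := by
            congr 1
            rw [hδdef]
            field_simp
            ring
    · intro h k
      obtain ⟨δ, hδpos, N, hcond⟩ := h k
      set l := ⌈1 / δ⌉₊ with hldef
      have hl1 : (0 : ℝ) < (l : ℝ) + 1 := by positivity
      have hlδ : 1 / ((l : ℝ) + 1) ≤ δ := by
        have h1 : 1 / δ ≤ (l : ℝ) := Nat.le_ceil _
        rw [div_le_iff₀ hl1]
        rw [div_le_iff₀ hδpos] at h1
        nlinarith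
      set W : ℝ := ∏ j ∈ range N, max 1 ‖w j‖ with hWdef
      have hW1 : (1 : ℝ) ≤ W := one_le_W w N
      have hWpos : (0 : ℝ) < W := lt_of_lt_of_le one_pos hW1
      refine ⟨l, W * Real.exp (al N), mul_pos hWpos (Real.exp_pos _), fun m hm n => ?_⟩
      simp only [AZero]
      rcases le_or_gt N (n + m) with hc | hc
      · have h1 := hcond n m hm hc
        have h2 : (∏ j ∈ range m, ‖w (n + j)‖) ≤
            Real.exp (al n / ((k : ℝ) + 1) - al (n + m) / ((l : ℝ) + 1)) := by
          refine h1.trans (Real.exp_le_exp.2 (sub_le_sub_left ?_ _))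
          calc al (n + m) / ((l : ℝ) + 1) = 1 / ((l : ℝ) + 1) * al (n + m) := by ring
            _ ≤ δ * al (n + m) := mul_le_mul_of_nonneg_right hlδ (hnn _)
        have hone : (1 : ℝ) ≤ W * Real.exp (al N) :=
          one_le_mul_of_one_le_of_one_le hW1 (Real.one_le_exp (hnn N))
        calc (∏ j ∈ range m, ‖w (n + j)‖) * Real.exp (-al n / ((k : ℝ) + 1))
            ≤ Real.exp (al n / ((k : ℝ) + 1) - al (n + m) / ((l : ℝ) + 1)) *
                Real.exp (-al n / ((k : ℝ) + 1)) :=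
              mul_le_mul_of_nonneg_right h2 (Real.exp_pos _).le
          _ = Real.exp (-al (n + m) / ((l : ℝ) + 1)) := by
              rw [← Real.exp_add]
              congr 1
              ring
          _ = 1 * Real.exp (-al (n + m) / ((l : ℝ) + 1)) := (one_mul _).symm
          _ ≤ W * Real.exp (al N) * Real.exp (-al (n + m) / ((l : ℝ) + 1)) :=
              mul_le_mul_of_nonneg_right hone (Real.exp_pos _).le
      · have h1 : (∏ j ∈ range m, ‖w (n + j)‖) ≤ W := prod_le_W w N n m (by omega)
        have h2 : Real.exp (-al n / ((k : ℝ) + 1)) ≤ 1 := by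
          have hk1 : (0 : ℝ) < (k : ℝ) + 1 := by positivity
          have hx : -al n / ((k : ℝ) + 1) ≤ 0 := by
            rw [div_le_iff₀ hk1]
            nlinarith [hnn n]
          calc Real.exp (-al n / ((k : ℝ) + 1)) ≤ Real.exp 0 := Real.exp_le_exp.2 hx
            _ = 1 := Real.exp_zero
        have h3 : (1 : ℝ) ≤ Real.exp (al N) * Real.exp (-al (n + m) / ((l : ℝ) + 1)) := by
          rw [← Real.exp_add]
          apply Real.one_le_exp
          have h4 : al (n + m) ≤ al N := hmono (by omega)
          have h5 : al (n + m) / ((l : ℝ) + 1) ≤ al (n + m) := by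
            rw [div_le_iff₀ hl1]
            nlinarith [hnn (n + m), Nat.cast_nonneg (α := ℝ) l]
          have h6 : -al (n + m) / ((l : ℝ) + 1) = -(al (n + m) / ((l : ℝ) + 1)) := by ring
          rw [h6]
          linarith
        calc (∏ j ∈ range m, ‖w (n + j)‖) * Real.exp (-al n / ((k : ℝ) + 1))
            ≤ W * 1 := mul_le_mul h1 h2 (Real.exp_pos _).le hWpos.le
          _ = W := mul_one _
          _ ≤ W * (Real.exp (al N) * Real.exp (-al (n + m) / ((l : ℝ) + 1))) :=
              le_mul_of_one_le_right hWpos.le h3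
          _ = W * Real.exp (al N) * Real.exp (-al (n + m) / ((l : ℝ) + 1)) := by ring
  -- Part (iv): F_w on Λ_0(α)
  · rw [pb_F_iff _ hposZ]
    constructor
    · intro h ε hε
      set k := ⌈2 / ε⌉₊ with hkdef
      have hk1 : (0 : ℝ) < (k : ℝ) + 1 := by positivity
      have hkε : 1 / ((k : ℝ) + 1) ≤ ε / 2 := by
        have h1 : 2 / ε ≤ (k : ℝ) := Nat.le_ceil _
        rw [div_le_iff₀ hk1]
        rw [div_le_iff₀ hε] at h1
        nlinarith
      obtain ⟨l, C, hC, hcond⟩ := h k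
      obtain ⟨N, hN⟩ :=
        eventually_atTop.1 (htop.eventually_ge_atTop (max 0 (Real.log C) / (ε / 2)))
      refine ⟨N, fun n m hm hNnm => ?_⟩
      have h1 := hcond m hm n
      simp only [AZero] at h1
      have hCle : C ≤ Real.exp (ε / 2 * al (n + m)) := by
        have h2 : max 0 (Real.log C) / (ε / 2) ≤ al (n + m) := hN (n + m) hNnm
        have h3 : max 0 (Real.log C) ≤ ε / 2 * al (n + m) := by
          rw [div_le_iff₀ (by positivity : (0 : ℝ) < ε / 2)] at h2
          linarith [h2]
        calc C = Real.exp (Real.log C) := (Real.exp_log hC).symm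
          _ ≤ Real.exp (ε / 2 * al (n + m)) :=
              Real.exp_le_exp.2 ((le_max_right _ _).trans h3)
      have hexp1 : Real.exp (-al n / ((l : ℝ) + 1)) ≤ 1 := by
        have hl1 : (0 : ℝ) < (l : ℝ) + 1 := by positivity
        have hx : -al n / ((l : ℝ) + 1) ≤ 0 := by
          rw [div_le_iff₀ hl1]
          nlinarith [hnn n]
        calc Real.exp (-al n / ((l : ℝ) + 1)) ≤ Real.exp 0 := Real.exp_le_exp.2 hx
          _ = 1 := Real.exp_zero
      have hexp2 : Real.exp (al (n + m) / ((k : ℝ) + 1)) ≤ Real.exp (ε / 2 * al (n + m)) := by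
        apply Real.exp_le_exp.2
        calc al (n + m) / ((k : ℝ) + 1) = 1 / ((k : ℝ) + 1) * al (n + m) := by ring
          _ ≤ ε / 2 * al (n + m) := mul_le_mul_of_nonneg_right hkε (hnn _)
      calc (∏ j ∈ Icc 1 m, ‖w (n + j)‖)
          = (∏ j ∈ Icc 1 m, ‖w (n + j)‖) * Real.exp (-al (n + m) / ((k : ℝ) + 1)) *
              Real.exp (al (n + m) / ((k : ℝ) + 1)) := by
            rw [mul_assoc, ← Real.exp_add,
              show -al (n + m) / ((k : ℝ) + 1) + al (n + m) / ((k : ℝ) + 1) = 0 by ring,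
              Real.exp_zero, mul_one]
        _ ≤ C * Real.exp (-al n / ((l : ℝ) + 1)) * Real.exp (al (n + m) / ((k : ℝ) + 1)) :=
            mul_le_mul_of_nonneg_right h1 (Real.exp_pos _).le
        _ ≤ C * 1 * Real.exp (ε / 2 * al (n + m)) := by
            apply mul_le_mul
            · exact mul_le_mul_of_nonneg_left hexp1 hC.le
            · exact hexp2
            · exact (Real.exp_pos _).le
            · exact mul_nonneg hC.le zero_le_one
        _ = C * Real.exp (ε / 2 * al (n + m)) := by rw [mul_one]
        _ ≤ Real.exp (ε / 2 * al (n + m)) * Real.exp (ε / 2 * al (n + m)) :=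
            mul_le_mul_of_nonneg_right hCle (Real.exp_pos _).le
        _ = Real.exp (ε * al (n + m)) := by
            rw [← Real.exp_add]
            congr 1
            ring
    · intro h k
      set ε : ℝ := 1 / (2 * ((k : ℝ) + 1)) with hεdef
      have hk1 : (0 : ℝ) < (k : ℝ) + 1 := by positivity
      have hεpos : 0 < ε := by positivity
      obtain ⟨N, hcond⟩ := h ε hεpos
      set l := 2 * k + 1 with hldef
      have hll : ((l : ℝ) + 1) = 2 * ((k : ℝ) + 1) := by
        rw [hldef]
        push_cast
        ring
      set W : ℝ := ∏ j ∈ range (N + 1), max 1 ‖w j‖ with hWdef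
      have hW1 : (1 : ℝ) ≤ W := one_le_W w (N + 1)
      have hWpos : (0 : ℝ) < W := lt_of_lt_of_le one_pos hW1
      refine ⟨l, W * Real.exp (al N), mul_pos hWpos (Real.exp_pos _), fun m hm n => ?_⟩
      simp only [AZero]
      have hone : (1 : ℝ) ≤ W * Real.exp (al N) :=
        one_le_mul_of_one_le_of_one_le hW1 (Real.one_le_exp (hnn N))
      rcases le_or_gt N (n + m) with hc | hc
      · have h1 := hcond n m hm hc
        have hc2 : (0 : ℝ) < 2 * ((k : ℝ) + 1) := by positivity
        have hmn : al n ≤ al (n + m) := hmono (by omega)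
        have key : ε * al (n + m) + -al (n + m) / ((k : ℝ) + 1) ≤ -al n / ((l : ℝ) + 1) := by
          rw [hll, hεdef]
          have e1 : 1 / (2 * ((k : ℝ) + 1)) * al (n + m) + -al (n + m) / ((k : ℝ) + 1)
              = -al (n + m) / (2 * ((k : ℝ) + 1)) := by
            field_simp
            ring
          rw [e1, div_le_div_iff₀ hc2 hc2]
          nlinarith
        calc (∏ j ∈ Icc 1 m, ‖w (n + j)‖) * Real.exp (-al (n + m) / ((k : ℝ) + 1))
            ≤ Real.exp (ε * al (n + m)) * Real.exp (-al (n + m) / ((k : ℝ) + 1)) :=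
              mul_le_mul_of_nonneg_right h1 (Real.exp_pos _).le
          _ = Real.exp (ε * al (n + m) + -al (n + m) / ((k : ℝ) + 1)) := (Real.exp_add _ _).symm
          _ ≤ Real.exp (-al n / ((l : ℝ) + 1)) := Real.exp_le_exp.2 key
          _ = 1 * Real.exp (-al n / ((l : ℝ) + 1)) := (one_mul _).symm
          _ ≤ W * Real.exp (al N) * Real.exp (-al n / ((l : ℝ) + 1)) :=
              mul_le_mul_of_nonneg_right hone (Real.exp_pos _).le
      · have hl1 : (0 : ℝ) < (l : ℝ) + 1 := by positivity
        have h1 : (∏ j ∈ Icc 1 m, ‖w (n + j)‖) ≤ W := prodIcc_le_W w N n m (by omega)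
        have h2 : Real.exp (-al (n + m) / ((k : ℝ) + 1)) ≤ 1 := by
          have hx : -al (n + m) / ((k : ℝ) + 1) ≤ 0 := by
            rw [div_le_iff₀ hk1]
            nlinarith [hnn (n + m)]
          calc Real.exp (-al (n + m) / ((k : ℝ) + 1)) ≤ Real.exp 0 := Real.exp_le_exp.2 hx
            _ = 1 := Real.exp_zero
        have h3 : (1 : ℝ) ≤ Real.exp (al N) * Real.exp (-al n / ((l : ℝ) + 1)) := by
          rw [← Real.exp_add]
          apply Real.one_le_exp
          have h4 : al n ≤ al N := hmono (by omega)
          have h5 : al n / ((l : ℝ) + 1) ≤ al n := by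
            rw [div_le_iff₀ hl1]
            nlinarith [hnn n, Nat.cast_nonneg (α := ℝ) l]
          have h6 : -al n / ((l : ℝ) + 1) = -(al n / ((l : ℝ) + 1)) := by ring
          rw [h6]
          linarith
        calc (∏ j ∈ Icc 1 m, ‖w (n + j)‖) * Real.exp (-al (n + m) / ((k : ℝ) + 1))
            ≤ W * 1 := mul_le_mul h1 h2 (Real.exp_pos _).le hWpos.le
          _ = W := mul_one _
          _ ≤ W * (Real.exp (al N) * Real.exp (-al n / ((l : ℝ) + 1))) :=
              le_mul_of_one_le_right hWpos.le h3
          _ = W * Real.exp (al N) * Real.exp (-al n / ((l : ℝ) + 1)) := by ring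
end
end

section
/- Let G be either ℂ or the open unit disk 𝔻 ⊂ ℂ, and let H(G) be the space of holomorphic functions on G endowed with the topology of uniform convergence on compact sets. The Volterra operator V : H(G) → H(G), (Vf)(z) = ∫_0^z f(ζ) dζ, is power bounded and uniformly mean ergodic. In particular: for every compact set K ⊂ G there exist a compact set L ⊂ G and C > 0 such that sup_{z∈K} |(V^m f)(z)| ≤ C · sup_{z∈L} |f(z)| for all m ∈ ℕ and all f ∈ H(G); and for every f ∈ H(G) the Cesàro means (1/n)∑_{m=1}^{n} V^m f converge in H(G) as n → ∞. -/
/-!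
Along the segment from `0` to `z` one gets `‖Vᵐ f z‖ ≤ sup ‖f‖ · ‖z‖ᵐ / m!`, so both the powers
`Vᵐ f` and the partial sums `∑_{m ≤ n} Vᵐ f` are bounded by `sup ‖f‖ · exp ‖z‖` on the star hull of
a compact set; hence the Cesàro means tend to `0` uniformly on compacta. Holomorphy of `V f` comes
from `V f = F - F 0` for a primitive `F` of `f`, which exists on discs and on `ℂ`.
-/

open Filter Finset

noncomputable section

/-- The `n`-th Cesàro mean `T^{[n]} = (1/n) ∑_{m=1}^n T^m` of an operator on `ℂ → ℂ`. -/
def cesaroC (T : (ℂ → ℂ) → ℂ → ℂ) (n : ℕ) (f : ℂ → ℂ) : ℂ → ℂ :=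
  (n : ℂ)⁻¹ • ∑ m ∈ Icc 1 n, T^[m] f

/-- The Volterra operator `(Vf)(z) = ∫_0^z f(ζ) dζ`, written via the segment from `0` to `z`. -/
def volterra (f : ℂ → ℂ) : ℂ → ℂ := fun z => z * ∫ t in (0:ℝ)..1, f ((t : ℂ) * z)

open Topology
open scoped Nat

theorem IsCompact.exists_starConvex_superset {E : Type*} [AddCommGroup E] [Module ℝ E]
    [TopologicalSpace E] [ContinuousSMul ℝ E] {K G : Set E} (hK : IsCompact K) (hKG : K ⊆ G)
    (hG : StarConvex ℝ 0 G) : ∃ L, K ⊆ L ∧ L ⊆ G ∧ IsCompact L ∧ StarConvex ℝ 0 L := by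
  refine ⟨(fun p : ℝ × E => p.1 • p.2) '' (Set.Icc 0 1 ×ˢ K), ?_, ?_, ?_, ?_⟩
  · exact fun z hz => ⟨(1, z), ⟨⟨zero_le_one, le_rfl⟩, hz⟩, one_smul ℝ z⟩
  · rintro _ ⟨⟨t, z⟩, ⟨ht, hz⟩, rfl⟩
    exact hG.smul_mem (hKG hz) ht.1 ht.2
  · exact (isCompact_Icc.prod hK).image continuous_smul
  · refine starConvex_zero_iff.2 ?_
    rintro _ ⟨⟨t, z⟩, ⟨ht, hz⟩, rfl⟩ a ha₀ ha₁
    exact ⟨(a * t, z), ⟨⟨mul_nonneg ha₀ ht.1, mul_le_one₀ ha₁ ht.1 ht.2⟩, hz⟩, mul_smul a t z⟩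

theorem IsCompact.norm_le_biSup_norm {α E : Type*} [TopologicalSpace α] [SeminormedAddGroup E]
    {L : Set α} {f : α → E} (hL : IsCompact L) (hf : ContinuousOn f L) {w : α} (hw : w ∈ L) :
    ‖f w‖ ≤ ⨆ y ∈ L, ‖f y‖ := by
  obtain ⟨B, hB⟩ := hL.exists_bound_of_continuousOn hf
  refine le_ciSup₂ (f := fun y (_ : y ∈ L) => ‖f y‖) ⟨B, ?_⟩ w hw
  rintro _ ⟨_, ⟨y, rfl⟩, ⟨hy, rfl⟩⟩
  exact hB y hy

theorem StarConvex.ofReal_mul_mem {S : Set ℂ} (hS : StarConvex ℝ 0 S) {z : ℂ} (hz : z ∈ S)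
    {t : ℝ} (ht : t ∈ Set.Icc (0:ℝ) 1) : (t : ℂ) * z ∈ S :=
  Complex.real_smul ▸ hS.smul_mem hz ht.1 ht.2

section Volterra

variable {S : Set ℂ} {f : ℂ → ℂ}

theorem volterra_eq_sub_of_hasDerivAt (hS : StarConvex ℝ 0 S) (hf : ContinuousOn f S)
    {F : ℂ → ℂ} (hF : ∀ w ∈ S, HasDerivAt F (f w) w) {z : ℂ} (hz : z ∈ S) :
    volterra f z = F z - F 0 := by
  have hderiv : ∀ t ∈ Set.uIcc (0:ℝ) 1,
      HasDerivAt (fun s : ℝ => F ((s : ℂ) * z)) (f ((t : ℂ) * z) * z) t := by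
    intro t ht
    rw [Set.uIcc_of_le zero_le_one] at ht
    have hmul : HasDerivAt (fun w : ℂ => w * z) z (t : ℂ) := by
      simpa using (hasDerivAt_id (t : ℂ)).mul_const z
    exact ((hF _ (hS.ofReal_mul_mem hz ht)).comp (t : ℂ) hmul).comp_ofReal
  have hint : IntervalIntegrable (fun t : ℝ => f ((t : ℂ) * z) * z) MeasureTheory.volume 0 1 := by
    refine ContinuousOn.intervalIntegrable (ContinuousOn.mul ?_ continuousOn_const)
    refine hf.comp (by fun_prop) fun t ht => hS.ofReal_mul_mem hz ?_
    rwa [Set.uIcc_of_le zero_le_one] at ht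
  rw [volterra, mul_comm, ← intervalIntegral.integral_mul_const,
    intervalIntegral.integral_eq_sub_of_hasDerivAt hderiv hint]
  simp

theorem Complex.IsExactOn.hasDerivAt_volterra (hSo : IsOpen S) (hS : StarConvex ℝ 0 S)
    (hf : Complex.IsExactOn f S) {z : ℂ} (hz : z ∈ S) : HasDerivAt (volterra f) (f z) z := by
  have hfc : ContinuousOn f S := (hf.differentiableOn hSo).continuousOn
  obtain ⟨F, hF⟩ := hf
  have hprim : volterra f =ᶠ[𝓝 z] fun w => F w - F 0 :=
    eventually_of_mem (hSo.mem_nhds hz) fun w hw => volterra_eq_sub_of_hasDerivAt hS hfc hF hw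
  exact ((hF z hz).sub_const (F 0)).congr_of_eventuallyEq hprim

theorem norm_volterra_le_of_norm_le_mul_pow (hS : StarConvex ℝ 0 S) {c : ℝ} {m : ℕ}
    (hf : ∀ w ∈ S, ‖f w‖ ≤ c * ‖w‖ ^ m) {z : ℂ} (hz : z ∈ S) :
    ‖volterra f z‖ ≤ c * ‖z‖ ^ (m + 1) / (m + 1) := by
  have hint : ‖∫ t in (0:ℝ)..1, f ((t : ℂ) * z)‖ ≤ ∫ t in (0:ℝ)..1, c * ‖z‖ ^ m * t ^ m := by
    refine intervalIntegral.norm_integral_le_of_norm_le zero_le_one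
      (MeasureTheory.ae_of_all _ fun t ht => ?_) (Continuous.intervalIntegrable (by fun_prop) _ _)
    have ht' : t ∈ Set.Icc (0:ℝ) 1 := Set.Ioc_subset_Icc_self ht
    calc ‖f ((t : ℂ) * z)‖ ≤ c * ‖(t : ℂ) * z‖ ^ m := hf _ (hS.ofReal_mul_mem hz ht')
      _ = c * ‖z‖ ^ m * t ^ m := by
        rw [norm_mul, Complex.norm_real, Real.norm_of_nonneg ht'.1]; ring
  calc ‖volterra f z‖ = ‖z‖ * ‖∫ t in (0:ℝ)..1, f ((t : ℂ) * z)‖ := norm_mul _ _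
    _ ≤ ‖z‖ * ∫ t in (0:ℝ)..1, c * ‖z‖ ^ m * t ^ m := by gcongr
    _ = c * ‖z‖ ^ (m + 1) / (m + 1) := by
      rw [intervalIntegral.integral_const_mul, integral_pow]
      field_simp
      ring

variable {M : ℝ}

theorem norm_iterate_volterra_le (hS : StarConvex ℝ 0 S) (hf : ∀ w ∈ S, ‖f w‖ ≤ M) (m : ℕ) :
    ∀ z ∈ S, ‖volterra^[m] f z‖ ≤ M / m ! * ‖z‖ ^ m := by
  induction m with
  | zero => simpa using hf
  | succ m ih =>
    intro z hz
    rw [Function.iterate_succ_apply']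
    refine (norm_volterra_le_of_norm_le_mul_pow hS ih hz).trans_eq ?_
    rw [Nat.factorial_succ]
    push_cast
    field_simp

theorem norm_iterate_volterra_le_mul_exp (hS : StarConvex ℝ 0 S) (hf : ∀ w ∈ S, ‖f w‖ ≤ M)
    (m : ℕ) {z : ℂ} (hz : z ∈ S) : ‖volterra^[m] f z‖ ≤ M * Real.exp ‖z‖ := by
  have hM : 0 ≤ M := (norm_nonneg _).trans (hf z hz)
  calc ‖volterra^[m] f z‖ ≤ M / m ! * ‖z‖ ^ m := norm_iterate_volterra_le hS hf m z hz
    _ = M * (‖z‖ ^ m / m !) := by ring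
    _ ≤ M * Real.exp ‖z‖ := by gcongr; exact Real.pow_div_factorial_le_exp _ (norm_nonneg z) m

theorem norm_sum_iterate_volterra_le_mul_exp (hS : StarConvex ℝ 0 S) (hf : ∀ w ∈ S, ‖f w‖ ≤ M)
    (n : ℕ) {z : ℂ} (hz : z ∈ S) : ‖∑ m ∈ Icc 1 n, volterra^[m] f z‖ ≤ M * Real.exp ‖z‖ := by
  have hM : 0 ≤ M := (norm_nonneg _).trans (hf z hz)
  calc ‖∑ m ∈ Icc 1 n, volterra^[m] f z‖ ≤ ∑ m ∈ Icc 1 n, M * (‖z‖ ^ m / m !) := by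
        refine (norm_sum_le _ _).trans (sum_le_sum fun m _ => ?_)
        exact (norm_iterate_volterra_le hS hf m z hz).trans_eq (by ring)
    _ ≤ ∑ m ∈ range (n + 1), M * (‖z‖ ^ m / m !) :=
        sum_le_sum_of_subset_of_nonneg (fun m hm => mem_range.2 (by grind))
          fun m _ _ => by positivity
    _ ≤ M * Real.exp ‖z‖ := by
        rw [← mul_sum]; gcongr; exact Real.sum_le_exp_of_nonneg (norm_nonneg z) _

theorem tendstoUniformlyOn_cesaroC_volterra {K : Set ℂ} {R : ℝ} (hS : StarConvex ℝ 0 S)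
    (hf : ∀ w ∈ S, ‖f w‖ ≤ M) (hKS : K ⊆ S) (hR : ∀ z ∈ K, ‖z‖ ≤ R) :
    TendstoUniformlyOn (fun n => cesaroC volterra n f) 0 atTop K := by
  have hbound : ∀ n : ℕ, ∀ z ∈ K, ‖cesaroC volterra n f z‖ ≤ (n : ℝ)⁻¹ * (M * Real.exp R) := by
    intro n z hz
    have hM : 0 ≤ M := (norm_nonneg _).trans (hf z (hKS hz))
    rw [cesaroC, Pi.smul_apply, Finset.sum_apply, norm_smul, norm_inv, Complex.norm_natCast]
    gcongr
    exact (norm_sum_iterate_volterra_le_mul_exp hS hf n (hKS hz)).trans (by gcongr; exact hR z hz)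
  have hlim : Tendsto (fun n : ℕ => (n : ℝ)⁻¹ * (M * Real.exp R)) atTop (𝓝 0) := by
    simpa using tendsto_inv_atTop_nhds_zero_nat.mul_const (M * Real.exp R)
  rw [Metric.tendstoUniformlyOn_iff]
  intro ε hε
  filter_upwards [hlim.eventually_lt_const hε] with n hn z hz
  simpa [dist_eq_norm] using (hbound n z hz).trans_lt hn

theorem IsCompact.exists_norm_iterate_volterra_le {K G : Set ℂ} (hK : IsCompact K) (hKG : K ⊆ G)
    (hG : StarConvex ℝ 0 G) : ∃ L ⊆ G, IsCompact L ∧ ∃ C > (0 : ℝ), ∀ (m : ℕ) (f : ℂ → ℂ),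
      ContinuousOn f G → ∀ z ∈ K, ‖volterra^[m] f z‖ ≤ C * ⨆ y ∈ L, ‖f y‖ := by
  obtain ⟨L, hKL, hLG, hL, hLs⟩ := hK.exists_starConvex_superset hKG hG
  obtain ⟨R, hR⟩ := hK.isBounded.exists_norm_le
  refine ⟨L, hLG, hL, Real.exp R, Real.exp_pos R, fun m f hf z hz => ?_⟩
  have hfL : ∀ w ∈ L, ‖f w‖ ≤ ⨆ y ∈ L, ‖f y‖ :=
    fun w hw => hL.norm_le_biSup_norm (hf.mono hLG) hw
  have hM : 0 ≤ ⨆ y ∈ L, ‖f y‖ := (norm_nonneg _).trans (hfL z (hKL hz))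
  calc ‖volterra^[m] f z‖ ≤ (⨆ y ∈ L, ‖f y‖) * Real.exp ‖z‖ :=
        norm_iterate_volterra_le_mul_exp hLs hfL m (hKL hz)
    _ ≤ Real.exp R * ⨆ y ∈ L, ‖f y‖ := by rw [mul_comm]; gcongr; exact hR z hz

end Volterra

/-- Theorem 4.4 (ii): on `H(G)` for `G ∈ {ℂ, 𝔻}`, the Volterra operator maps `H(G)` to `H(G)`,
is power bounded (equicontinuity of all powers w.r.t. the sup-seminorms on compact sets), and
is (uniformly) mean ergodic: the Cesàro means of every `f ∈ H(G)` converge in `H(G)`,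
i.e. uniformly on every compact subset of `G`. -/
theorem statement17 (G : Set ℂ) (hG : G = Set.univ ∨ G = Metric.ball 0 1) :
    (∀ f : ℂ → ℂ, DifferentiableOn ℂ f G → DifferentiableOn ℂ (volterra f) G) ∧
    (∀ K : Set ℂ, K ⊆ G → IsCompact K → ∃ L : Set ℂ, L ⊆ G ∧ IsCompact L ∧ ∃ C > (0 : ℝ),
      ∀ m : ℕ, 1 ≤ m → ∀ f : ℂ → ℂ, DifferentiableOn ℂ f G → ∀ z ∈ K,
        ‖volterra^[m] f z‖ ≤ C * ⨆ y ∈ L, ‖f y‖) ∧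
    (∀ f : ℂ → ℂ, DifferentiableOn ℂ f G → ∃ g : ℂ → ℂ, DifferentiableOn ℂ g G ∧
      ∀ K : Set ℂ, K ⊆ G → IsCompact K →
        TendstoUniformlyOn (fun n => cesaroC volterra n f) g atTop K) := by
  have hGo : IsOpen G := by
    rcases hG with rfl | rfl
    exacts [isOpen_univ, Metric.isOpen_ball]
  have hGs : StarConvex ℝ 0 G := by
    rcases hG with rfl | rfl
    exacts [starConvex_univ 0, (convex_ball 0 1).starConvex (Metric.mem_ball_self one_pos)]
  have hGex : ∀ f : ℂ → ℂ, DifferentiableOn ℂ f G → Complex.IsExactOn f G := by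
    rcases hG with rfl | rfl
    exacts [fun f hf => (differentiableOn_univ.1 hf).isExactOn_univ,
      fun f hf => hf.isExactOn_ball]
  refine ⟨fun f hf z hz =>
    ((hGex f hf).hasDerivAt_volterra hGo hGs hz).differentiableAt.differentiableWithinAt, ?_, ?_⟩
  · intro K hKG hK
    obtain ⟨L, hLG, hL, C, hC, hbound⟩ := hK.exists_norm_iterate_volterra_le hKG hGs
    exact ⟨L, hLG, hL, C, hC, fun m _ f hf => hbound m f hf.continuousOn⟩
  · intro f hf
    refine ⟨0, differentiableOn_zero, fun K hKG hK => ?_⟩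
    obtain ⟨L, hKL, hLG, hL, hLs⟩ := hK.exists_starConvex_superset hKG hGs
    obtain ⟨M, hM⟩ := hL.exists_bound_of_continuousOn (hf.continuousOn.mono hLG)
    obtain ⟨R, hR⟩ := hK.isBounded.exists_norm_le
    exact tendstoUniformlyOn_cesaroC_volterra hLs hM hKL hR
end
end

section
/- Let G be either ℂ or the open unit disk 𝔻 ⊂ ℂ, and let H(G) be the space of holomorphic functions on G endowed with the topology of uniform convergence on compact sets. The differentiation operator d/dz : H(G) → H(G), f ↦ f′, is topologizable but not mean ergodic. In particular: for every compact set K ⊂ G there is a compact set L ⊂ G such that for every m ∈ ℕ there is γ_m > 0 with sup_{z∈K} |f^{(m)}(z)| ≤ γ_m · sup_{z∈L} |f(z)| for all f ∈ H(G); but there exists f ∈ H(G) for which the Cesàro means (1/n)∑_{m=1}^{n} f^{(m)} do not converge in H(G). -/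
/-!
Topologizability is Cauchy's estimate: a compact `K ⊆ G` has a closed `δ`-thickening `L` still
inside `G`, and every `z ∈ K` is the centre of a disc of radius `δ` contained in `L`, so
`|f⁽ᵐ⁾(z)| ≤ m! δ⁻ᵐ sup_L |f|`. Mean ergodicity fails for `f(z) = e^{4z}`: its `m`-th derivative
is `4ᵐ f`, so the `n`-th Cesàro mean at any point is `f(z)` times `(1/n) ∑ 4ᵐ ≥ 4ⁿ/n ≥ n`,
which is unbounded already at a single point.
-/

open Filter Finset

noncomputable section

def derivOp (f : ℂ → ℂ) : ℂ → ℂ := deriv f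

open Metric Complex

lemma IsCompact.le_biSup_of_continuousOn {α : Type*} [TopologicalSpace α] {g : α → ℝ}
    {L : Set α} (hL : IsCompact L) (hg : ContinuousOn g L) {w : α} (hw : w ∈ L) :
    g w ≤ ⨆ y ∈ L, g y := by
  refine le_ciSup₂ (f := fun y (_ : y ∈ L) => g y) ((hL.bddAbove_image hg).mono ?_) w hw
  simp only [Set.iUnion_subset_iff, Set.range_subset_iff]
  exact fun y hy => ⟨y, hy, rfl⟩

lemma iterate_derivOp_eq_iteratedDeriv (m : ℕ) : derivOp^[m] = iteratedDeriv m := by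
  funext f
  rw [iteratedDeriv_eq_iterate]
  rfl

theorem exists_isCompact_norm_iterate_derivOp_le {G K : Set ℂ} (hG : IsOpen G) (hKG : K ⊆ G)
    (hK : IsCompact K) :
    ∃ L : Set ℂ, L ⊆ G ∧ IsCompact L ∧ ∀ m : ℕ, ∃ γ > (0 : ℝ), ∀ f : ℂ → ℂ,
      DifferentiableOn ℂ f G → ∀ z ∈ K, ‖derivOp^[m] f z‖ ≤ γ * ⨆ y ∈ L, ‖f y‖ := by
  obtain ⟨δ, hδ, hδG⟩ := hK.exists_cthickening_subset_open hG hKG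
  refine ⟨cthickening δ K, hδG, hK.cthickening,
    fun m => ⟨m.factorial / δ ^ m, by positivity, fun f hf z hz => ?_⟩⟩
  have hzL : closedBall z δ ⊆ cthickening δ K := closedBall_subset_cthickening hz δ
  have hbound : ∀ w ∈ sphere z δ, ‖f w‖ ≤ ⨆ y ∈ cthickening δ K, ‖f y‖ := fun w hw =>
    hK.cthickening.le_biSup_of_continuousOn (hf.continuousOn.mono hδG).norm
      (hzL (sphere_subset_closedBall hw))
  rw [iterate_derivOp_eq_iteratedDeriv, div_mul_eq_mul_div]
  exact norm_iteratedDeriv_le_of_forall_mem_sphere_norm_le m hδ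
    (hf.diffContOnCl_ball (hzL.trans hδG)) hbound

lemma cesaroC_derivOp_cexp_const_mul (c z : ℂ) (n : ℕ) :
    cesaroC derivOp n (fun s => cexp (c * s)) z
      = (n : ℂ)⁻¹ * (∑ m ∈ Icc 1 n, c ^ m) * cexp (c * z) := by
  simp [cesaroC, iterate_derivOp_eq_iteratedDeriv, Finset.sum_apply, Finset.sum_mul, mul_assoc]

lemma natCast_le_norm_inv_mul_sum_four_pow (n : ℕ) :
    (n : ℝ) ≤ ‖(n : ℂ)⁻¹ * ∑ m ∈ Icc 1 n, (4 : ℂ) ^ m‖ := by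
  have hreal : (n : ℂ)⁻¹ * ∑ m ∈ Icc 1 n, (4 : ℂ) ^ m
      = (((n : ℝ)⁻¹ * ∑ m ∈ Icc 1 n, (4 : ℝ) ^ m : ℝ) : ℂ) := by
    push_cast
    rfl
  rw [hreal, norm_real, Real.norm_of_nonneg (by positivity)]
  rcases Nat.eq_zero_or_pos n with rfl | hn
  · simp
  have hsq : (n : ℝ) * n ≤ 4 ^ n := by
    have h : (n : ℝ) ≤ 2 ^ n := by exact_mod_cast n.lt_two_pow_self.le
    calc (n : ℝ) * n ≤ 2 ^ n * 2 ^ n := by gcongr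
      _ = 4 ^ n := by rw [← mul_pow]; norm_num
  have hsum : (4 : ℝ) ^ n ≤ ∑ m ∈ Icc 1 n, (4 : ℝ) ^ m :=
    single_le_sum (fun m _ => by positivity) (mem_Icc.2 ⟨hn, le_rfl⟩)
  rw [← div_eq_inv_mul, le_div_iff₀ (by exact_mod_cast hn)]
  exact hsq.trans hsum

theorem tendsto_norm_cesaroC_derivOp_cexp_four_mul (z : ℂ) :
    Tendsto (fun n => ‖cesaroC derivOp n (fun s => cexp (4 * s)) z‖) atTop atTop := by
  refine tendsto_atTop_mono (fun n => ?_)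
    (tendsto_natCast_atTop_atTop.atTop_mul_const (norm_pos_iff.2 (exp_ne_zero (4 * z))))
  rw [cesaroC_derivOp_cexp_const_mul, norm_mul]
  gcongr
  exact natCast_le_norm_inv_mul_sum_four_pow n

/-- Theorem 4.4 (iii): on `H(G)` for `G ∈ {ℂ, 𝔻}`, the differentiation operator is
topologizable, but there is `f ∈ H(G)` whose Cesàro means do not converge in `H(G)`
(so `d/dz` is not mean ergodic). -/
theorem statement18 (G : Set ℂ) (hG : G = Set.univ ∨ G = Metric.ball 0 1) :
    (∀ K : Set ℂ, K ⊆ G → IsCompact K → ∃ L : Set ℂ, L ⊆ G ∧ IsCompact L ∧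
      ∀ m : ℕ, 1 ≤ m → ∃ γ > (0 : ℝ), ∀ f : ℂ → ℂ, DifferentiableOn ℂ f G → ∀ z ∈ K,
        ‖derivOp^[m] f z‖ ≤ γ * ⨆ y ∈ L, ‖f y‖) ∧
    (∃ f : ℂ → ℂ, DifferentiableOn ℂ f G ∧
      ¬ ∃ g : ℂ → ℂ, DifferentiableOn ℂ g G ∧ ∀ K : Set ℂ, K ⊆ G → IsCompact K →
        TendstoUniformlyOn (fun n => cesaroC derivOp n f) g atTop K) := by
  have hGopen : IsOpen G := by
    rcases hG with rfl | rfl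
    exacts [isOpen_univ, isOpen_ball]
  have hzero : (0 : ℂ) ∈ G := by
    rcases hG with rfl | rfl <;> simp
  refine ⟨fun K hKG hK => ?_, ⟨fun s => cexp (4 * s), by fun_prop, ?_⟩⟩
  · obtain ⟨L, hLG, hL, hγ⟩ := exists_isCompact_norm_iterate_derivOp_le hGopen hKG hK
    exact ⟨L, hLG, hL, fun m _ => hγ m⟩
  · rintro ⟨g, -, hg⟩
    have hconv := (hg {0} (Set.singleton_subset_iff.2 hzero) isCompact_singleton).tendsto_at rfl
    exact not_tendsto_nhds_of_tendsto_atTop (tendsto_norm_cesaroC_derivOp_cexp_four_mul 0) _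
      hconv.norm
end
end

section
/- Let 𝒮(ℝ) be the Schwartz space of rapidly decreasing smooth complex-valued functions on ℝ, and define the creation operator A_+ f = (−f′ + x f)/√2 and the annihilation operator A_− f = (f′ + x f)/√2. Both A_+ and A_− are continuous linear operators on 𝒮(ℝ), but neither is topologizable: for each of A_+ and A_−, there exists a continuous seminorm p on 𝒮(ℝ) such that for every continuous seminorm q on 𝒮(ℝ) there is m ∈ ℕ with sup{ p(A_±^m f) : f ∈ 𝒮(ℝ), q(f) ≤ 1 } = ∞. In particular, neither A_+ nor A_− is power bounded or mean ergodic on 𝒮(ℝ). -/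
/-!
The translated Gaussians `φ_a x = exp (-(x - a)² / 2)` satisfy `A₋ φ_a = (a/√2) φ_a`, and since
`A₊` is the formal adjoint of `A₋`, the pairing `ℓ_a g = ∫ φ_a g` satisfies
`ℓ_a (A₊ g) = (a/√2) ℓ_a g`. So for `T = A₊` or `T = A₋` we get `ℓ_a (T^m φ_a) = (a/√2)^m √π`,
and as `|ℓ_a g| ≤ √(2π) ‖g‖_∞`, the sup norm of `T^m φ_a` is at least of order `a^m`.
A continuous seminorm `q`, being dominated by finitely many Schwartz seminorms, grows only
polynomially along translates: `q φ_a ≤ D (1 + |a|)^K`. Hence `‖T^(K+1) f‖_∞` is unbounded on the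
`q`-unit ball. Mean ergodicity would force `T^n f / n → 0`, which fails for `f = φ_(2√2)`.
-/

open Filter Finset

noncomputable section

/-- Multiplication by the variable, `f ↦ (t ↦ t·f(t))`, on the Schwartz space. -/
def xmulS : SchwartzMap ℝ ℂ →L[ℝ] SchwartzMap ℝ ℂ :=
  SchwartzMap.bilinLeftCLM (ContinuousLinearMap.mul ℝ ℂ).flip
    Complex.ofRealCLM.hasTemperateGrowth

/-- The creation operator `A₊ f = (-f' + x f)/√2` on the Schwartz space. -/
def creationOp (f : SchwartzMap ℝ ℂ) : SchwartzMap ℝ ℂ :=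
  (Real.sqrt 2)⁻¹ • (xmulS f - SchwartzMap.derivCLM ℝ ℂ f)

/-- The annihilation operator `A₋ f = (f' + x f)/√2` on the Schwartz space. -/
def annihilationOp (f : SchwartzMap ℝ ℂ) : SchwartzMap ℝ ℂ :=
  (Real.sqrt 2)⁻¹ • (SchwartzMap.derivCLM ℝ ℂ f + xmulS f)

/-- An operator on the Schwartz space is power bounded. -/
def PowerBoundedS (T : SchwartzMap ℝ ℂ → SchwartzMap ℝ ℂ) : Prop :=
  ∀ p : Seminorm ℝ (SchwartzMap ℝ ℂ), Continuous p →
    ∃ q : Seminorm ℝ (SchwartzMap ℝ ℂ), Continuous q ∧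
      ∀ m : ℕ, 1 ≤ m → ∀ f, p (T^[m] f) ≤ q f

/-- An operator on the Schwartz space is mean ergodic. -/
def MeanErgodicS (T : SchwartzMap ℝ ℂ → SchwartzMap ℝ ℂ) : Prop :=
  ∃ P : SchwartzMap ℝ ℂ →L[ℂ] SchwartzMap ℝ ℂ, ∀ f,
    Tendsto (fun n : ℕ => (n : ℂ)⁻¹ • ∑ m ∈ Icc 1 n, T^[m] f) atTop (nhds (P f))

open MeasureTheory Polynomial Real
open scoped SchwartzMap Topology ZeroAtInfty

namespace SchwartzMap

variable {𝕜 E F : Type*} [RCLike 𝕜] [NormedAddCommGroup E] [NormedSpace ℝ E]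
  [NormedAddCommGroup F] [NormedSpace ℝ F] [NormedSpace 𝕜 F]

theorem seminorm_compSubConstCLM_le {m : ℕ × ℕ} {k n : ℕ} (hk : k ≤ m.1) (hn : n ≤ m.2)
    (f : 𝓢(E, F)) (a : E) :
    SchwartzMap.seminorm 𝕜 k n (compSubConstCLM 𝕜 a f) ≤
      (1 + ‖a‖) ^ k *
        (2 ^ m.1 * (Finset.Iic m).sup (fun m => SchwartzMap.seminorm 𝕜 m.1 m.2) f) := by
  refine seminorm_le_bound 𝕜 k n _ (by positivity) fun x => ?_
  have hx : ‖x‖ ≤ (1 + ‖a‖) * (1 + ‖x - a‖) := by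
    nlinarith [norm_le_norm_add_norm_sub' x a, norm_nonneg a, norm_nonneg (x - a)]
  calc ‖x‖ ^ k * ‖iteratedFDeriv ℝ n (compSubConstCLM 𝕜 a f) x‖
      ≤ ((1 + ‖a‖) * (1 + ‖x - a‖)) ^ k * ‖iteratedFDeriv ℝ n f (x - a)‖ := by
        rw [show ⇑(compSubConstCLM 𝕜 a f) = fun y => f (y - a) from rfl, iteratedFDeriv_comp_sub]
        gcongr
    _ = (1 + ‖a‖) ^ k * ((1 + ‖x - a‖) ^ k * ‖iteratedFDeriv ℝ n f (x - a)‖) := by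
        rw [mul_pow, mul_assoc]
    _ ≤ _ := mul_le_mul_of_nonneg_left (one_add_le_sup_seminorm_apply hk hn f (x - a))
        (by positivity)

theorem exists_seminorm_compSubConstCLM_le (q : Seminorm 𝕜 𝓢(E, F)) (hq : Continuous q)
    (f : 𝓢(E, F)) :
    ∃ (K : ℕ) (D : ℝ), 0 < D ∧ ∀ a, q (compSubConstCLM 𝕜 a f) ≤ D * (1 + ‖a‖) ^ K := by
  obtain ⟨s, C, -, hC⟩ := Seminorm.bound_of_continuous (schwartz_withSeminorms 𝕜 E F) q hq
  set m := s.sup id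
  set M := 2 ^ m.1 * (Finset.Iic m).sup (fun m => SchwartzMap.seminorm 𝕜 m.1 m.2) f
  refine ⟨m.1, C * M + 1, by positivity, fun a => ?_⟩
  have hs : ∀ i ∈ s, SchwartzMap.seminorm 𝕜 i.1 i.2 (compSubConstCLM 𝕜 a f) ≤
      (1 + ‖a‖) ^ m.1 * M := fun i hi => by
    have him : i ≤ m := Finset.le_sup (f := id) hi
    exact (seminorm_compSubConstCLM_le him.1 him.2 f a).trans
      (mul_le_mul_of_nonneg_right (pow_le_pow_right₀ (by simp) him.1) (by positivity))
  calc q (compSubConstCLM 𝕜 a f)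
      ≤ C * (s.sup (schwartzSeminormFamily 𝕜 E F)) (compSubConstCLM 𝕜 a f) := hC _
    _ ≤ C * ((1 + ‖a‖) ^ m.1 * M) := by
        gcongr; exact Seminorm.finset_sup_apply_le (by positivity) hs
    _ ≤ (C * M + 1) * (1 + ‖a‖) ^ m.1 := by
        nlinarith [pow_nonneg (by positivity : (0 : ℝ) ≤ 1 + ‖a‖) m.1]

theorem integrable_mul {D : Type*} [NormedAddCommGroup D] [NormedSpace ℝ D]
    [MeasurableSpace D] [BorelSpace D] [SecondCountableTopology D] {μ : Measure D}
    [μ.HasTemperateGrowth] (u v : 𝓢(D, ℂ)) : Integrable (fun x => u x * v x) μ :=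
  (pairing (ContinuousLinearMap.mul ℂ ℂ) u v).integrable

end SchwartzMap

theorem exists_lt_seminorm_iterate_of_growth {E : Type*} [AddCommGroup E] [Module ℝ E]
    {T : E → E} (hT : ∀ (c : ℝ) x, T (c • x) = c • T x) {p q : Seminorm ℝ E} {φ : ℝ → E}
    {K : ℕ} {c D : ℝ} (hc : 0 < c) (hD : 0 < D) (hq : ∀ a ≥ 1, q (φ a) ≤ D * a ^ K)
    (hp : ∀ a ≥ 1, c * a ^ (K + 1) ≤ p (T^[K + 1] (φ a))) (C : ℝ) :
    ∃ f, q f ≤ 1 ∧ C < p (T^[K + 1] f) := by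
  set a := max 1 ((C + 1) * D / c)
  have ha : 1 ≤ a := le_max_left _ _
  have hDa : 0 < D * a ^ K := by positivity
  refine ⟨(D * a ^ K)⁻¹ • φ a, ?_, ?_⟩
  · rw [map_smul_eq_mul, Real.norm_of_nonneg (by positivity), inv_mul_le_iff₀ hDa, mul_one]
    exact hq a ha
  · have hcomm : Function.Commute T ((D * a ^ K)⁻¹ • ·) := fun x => hT _ x
    rw [(hcomm.iterate_left (K + 1)) (φ a), map_smul_eq_mul, Real.norm_of_nonneg (by positivity),
      lt_inv_mul_iff₀ hDa]
    calc D * a ^ K * C < D * a ^ K * ((C + 1) * D / c * (c / D)) := by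
          field_simp; nlinarith
      _ ≤ D * a ^ K * (a * (c / D)) := by gcongr; exact le_max_right _ _
      _ = c * a ^ (K + 1) := by field_simp; ring
      _ ≤ p (T^[K + 1] (φ a)) := hp a ha

theorem tendsto_inv_smul_iterate_of_tendsto_cesaro {𝕜 E : Type*} [RCLike 𝕜] [AddCommGroup E]
    [TopologicalSpace E] [IsTopologicalAddGroup E] [Module 𝕜 E] [ContinuousSMul 𝕜 E]
    {T : E → E} {x y : E}
    (h : Tendsto (fun n : ℕ => (n : 𝕜)⁻¹ • ∑ m ∈ Icc 1 n, T^[m] x) atTop (𝓝 y)) :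
    Tendsto (fun n : ℕ => ((n + 1 : ℕ) : 𝕜)⁻¹ • T^[n + 1] x) atTop (𝓝 0) := by
  -- `(n + 1)⁻¹ • T^[n + 1] x` is the `(n + 1)`-st Cesàro mean minus `n / (n + 1)` times the `n`-th.
  have hlim := (tendsto_add_atTop_iff_nat 1).mpr h |>.sub
    ((tendsto_natCast_div_add_atTop (1 : 𝕜)).smul h)
  rw [one_smul, sub_self] at hlim
  refine hlim.congr fun n => ?_
  have hcoef : (n / (n + 1) : 𝕜) • (n : 𝕜)⁻¹ • ∑ m ∈ Icc 1 n, T^[m] x =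
      ((n + 1 : ℕ) : 𝕜)⁻¹ • ∑ m ∈ Icc 1 n, T^[m] x := by
    rcases n.eq_zero_or_pos with rfl | hn
    · simp
    · have hn' : (n : 𝕜) ≠ 0 := by exact_mod_cast hn.ne'
      rw [smul_smul]; push_cast; field_simp
  rw [hcoef, Finset.sum_Icc_succ_top (by omega), smul_add, add_sub_cancel_left]

theorem tendsto_pow_mul_exp_neg_sq_div_two_cocompact (i : ℕ) :
    Tendsto (fun x : ℝ => x ^ i * Real.exp (-(x ^ 2 / 2))) (cocompact ℝ) (𝓝 0) := by
  rw [tendsto_zero_iff_norm_tendsto_zero]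
  convert tendsto_rpow_abs_mul_exp_neg_mul_sq_cocompact one_half_pos i using 2 with x
  rw [norm_mul, norm_pow, Real.norm_eq_abs, Real.norm_of_nonneg (Real.exp_pos _).le,
    Real.rpow_natCast]
  ring_nf

theorem tendsto_eval_mul_exp_neg_sq_div_two_cocompact (P : ℝ[X]) :
    Tendsto (fun x : ℝ => P.eval x * Real.exp (-(x ^ 2 / 2))) (cocompact ℝ) (𝓝 0) := by
  induction P using Polynomial.induction_on' with
  | add P Q hP hQ => simpa [add_mul] using hP.add hQ
  | monomial n c =>
    simpa [mul_assoc] using (tendsto_pow_mul_exp_neg_sq_div_two_cocompact n).const_mul c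

def gaussianSchwartz : 𝓢(ℝ, ℝ) where
  toFun x := Real.exp (-(x ^ 2 / 2))
  smooth' := by fun_prop
  decay' k n := by
    let P : ℝ[X] := X ^ k * ((hermite n).map (Int.castRingHom ℝ))
    let g : C₀(ℝ, ℝ) := ⟨⟨fun x => P.eval x * Real.exp (-(x ^ 2 / 2)), by fun_prop⟩,
      tendsto_eval_mul_exp_neg_sq_div_two_cocompact P⟩
    refine ⟨‖g.toBCF‖, fun x => ?_⟩
    convert g.toBCF.norm_coe_le_norm x using 1
    rw [norm_iteratedFDeriv_eq_norm_iteratedDeriv, iteratedDeriv_eq_iterate,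
      deriv_gaussian_eq_hermite_mul_gaussian]
    simp [P, g, norm_mul, aeval_def, eval₂_eq_eval_map, mul_assoc]

def gaussianAt (a : ℝ) : 𝓢(ℝ, ℂ) :=
  SchwartzMap.compSubConstCLM ℝ a (SchwartzMap.postcompCLM Complex.ofRealCLM gaussianSchwartz)

theorem gaussianAt_apply (a x : ℝ) : gaussianAt a x = Real.exp (-((x - a) ^ 2 / 2)) := rfl

theorem hasDerivAt_gaussianAt (a x : ℝ) :
    HasDerivAt (gaussianAt a) ((a - x : ℂ) * gaussianAt a x) x := by
  have hexp : HasDerivAt (fun y : ℝ => -((y - a) ^ 2 / 2)) (a - x) x :=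
    ((((hasDerivAt_id' x).sub_const a).fun_pow 2).div_const 2).fun_neg.congr_deriv (by ring)
  show HasDerivAt (fun y : ℝ => ((Real.exp (-((y - a) ^ 2 / 2)) : ℝ) : ℂ)) _ x
  convert hexp.exp.ofReal_comp using 1
  rw [gaussianAt_apply]
  push_cast
  ring

def xmulCLM : 𝓢(ℝ, ℂ) →L[ℂ] 𝓢(ℝ, ℂ) :=
  SchwartzMap.bilinLeftCLM (ContinuousLinearMap.mul ℂ ℂ).flip
    Complex.ofRealCLM.hasTemperateGrowth

def creationCLM : 𝓢(ℝ, ℂ) →L[ℂ] 𝓢(ℝ, ℂ) :=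
  (√2)⁻¹ • (xmulCLM - SchwartzMap.derivCLM ℂ ℂ)

def annihilationCLM : 𝓢(ℝ, ℂ) →L[ℂ] 𝓢(ℝ, ℂ) :=
  (√2)⁻¹ • (SchwartzMap.derivCLM ℂ ℂ + xmulCLM)

theorem coe_creationCLM : ⇑creationCLM = creationOp := by
  funext f; ext x; rfl

theorem coe_annihilationCLM : ⇑annihilationCLM = annihilationOp := by
  funext f; ext x; rfl

theorem creationOp_apply (f : 𝓢(ℝ, ℂ)) (x : ℝ) :
    creationOp f x = ((√2)⁻¹ : ℂ) * (x * f x - deriv f x) := by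
  simp only [creationOp, xmulS, ContinuousLinearMap.flip_mul, smul_apply, sub_apply,
    SchwartzMap.bilinLeftCLM_apply, Complex.ofRealCLM_apply, ContinuousLinearMap.mul_apply',
    SchwartzMap.derivCLM_apply, Complex.real_smul, Complex.ofReal_inv]
  ring

theorem annihilationOp_apply (f : 𝓢(ℝ, ℂ)) (x : ℝ) :
    annihilationOp f x = ((√2)⁻¹ : ℂ) * (deriv f x + x * f x) := by
  simp only [annihilationOp, xmulS, ContinuousLinearMap.flip_mul, add_apply, smul_apply,
    SchwartzMap.bilinLeftCLM_apply, Complex.ofRealCLM_apply, ContinuousLinearMap.mul_apply',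
    SchwartzMap.derivCLM_apply, Complex.real_smul, Complex.ofReal_inv]
  ring

theorem annihilationOp_gaussianAt (a : ℝ) :
    annihilationOp (gaussianAt a) = (a / √2) • gaussianAt a := by
  ext x
  rw [annihilationOp_apply, (hasDerivAt_gaussianAt a x).deriv, smul_apply,
    Complex.real_smul]
  push_cast
  ring

theorem integral_mul_creationOp (f g : 𝓢(ℝ, ℂ)) :
    ∫ x, f x * creationOp g x = ∫ x, annihilationOp f x * g x := by
  have hx : Integrable (fun x : ℝ => (x : ℂ) * f x * g x) := by
    simpa [xmulS, mul_comm] using SchwartzMap.integrable_mul (μ := volume) (xmulS f) g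
  have hfg' : Integrable (fun x => f x * deriv g x) :=
    SchwartzMap.integrable_mul (μ := volume) f (SchwartzMap.derivCLM ℝ ℂ g)
  have hf'g : Integrable (fun x => deriv f x * g x) :=
    SchwartzMap.integrable_mul (μ := volume) (SchwartzMap.derivCLM ℝ ℂ f) g
  calc ∫ x, f x * creationOp g x
      = (√2 : ℂ)⁻¹ * ((∫ x : ℝ, x * f x * g x) - ∫ x, f x * deriv g x) := by
        rw [← integral_sub hx hfg', ← integral_const_mul]
        congr with x
        rw [creationOp_apply]
        ring
    _ = (√2 : ℂ)⁻¹ * ((∫ x, deriv f x * g x) + ∫ x : ℝ, x * f x * g x) := by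
        rw [SchwartzMap.integral_mul_deriv_eq_neg_deriv_mul]
        ring
    _ = ∫ x, annihilationOp f x * g x := by
        rw [← integral_add hf'g hx, ← integral_const_mul]
        congr with x
        rw [annihilationOp_apply]
        ring

def gaussPairing (a : ℝ) : 𝓢(ℝ, ℂ) →L[ℂ] ℂ :=
  (SchwartzMap.integralCLM ℂ volume).comp
    (SchwartzMap.pairing (ContinuousLinearMap.mul ℂ ℂ) (gaussianAt a))

theorem gaussPairing_apply (a : ℝ) (g : 𝓢(ℝ, ℂ)) :
    gaussPairing a g = ∫ x, gaussianAt a x * g x := rfl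

theorem gaussPairing_creationOp (a : ℝ) (g : 𝓢(ℝ, ℂ)) :
    gaussPairing a (creationOp g) = (a / √2 : ℝ) * gaussPairing a g := by
  simp only [gaussPairing_apply, integral_mul_creationOp, annihilationOp_gaussianAt, smul_apply,
    Complex.real_smul, mul_assoc, integral_const_mul]

theorem gaussPairing_gaussianAt (a : ℝ) : gaussPairing a (gaussianAt a) = √π := by
  have h : ∫ x : ℝ, Real.exp (-1 * (x - a) ^ 2) = √π := by
    rw [integral_sub_right_eq_self (fun x => Real.exp (-1 * x ^ 2)) a, integral_gaussian]
    norm_num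
  rw [gaussPairing_apply, ← h, ← integral_complex_ofReal]
  congr with x
  rw [gaussianAt_apply, ← Complex.ofReal_mul, ← Real.exp_add]
  ring_nf

theorem norm_gaussPairing_le (a : ℝ) (g : 𝓢(ℝ, ℂ)) :
    ‖gaussPairing a g‖ ≤ √(2 * π) * SchwartzMap.seminorm ℂ 0 0 g := by
  have h : ∫ x : ℝ, Real.exp (-(1 / 2) * (x - a) ^ 2) = √(2 * π) := by
    rw [integral_sub_right_eq_self (fun x => Real.exp (-(1 / 2) * x ^ 2)) a, integral_gaussian]
    congr 1
    ring
  have hint : Integrable (fun x : ℝ => Real.exp (-(1 / 2) * (x - a) ^ 2)) :=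
    (integrable_exp_neg_mul_sq one_half_pos).comp_sub_right a
  rw [gaussPairing_apply, ← h, ← integral_mul_const]
  refine norm_integral_le_of_norm_le (hint.mul_const _) (Eventually.of_forall fun x => ?_)
  rw [norm_mul, gaussianAt_apply, Complex.norm_real, Real.norm_of_nonneg (Real.exp_pos _).le]
  refine mul_le_mul (le_of_eq ?_) (SchwartzMap.norm_le_seminorm ℂ g x) (norm_nonneg _)
    (Real.exp_pos _).le
  ring_nf

theorem not_powerBoundedS_of_unbounded_iterate {T : 𝓢(ℝ, ℂ) → 𝓢(ℝ, ℂ)}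
    {p : Seminorm ℝ 𝓢(ℝ, ℂ)} (hp : Continuous p)
    (h : ∀ q : Seminorm ℝ 𝓢(ℝ, ℂ), Continuous q →
      ∃ m : ℕ, 1 ≤ m ∧ ∀ C : ℝ, ∃ f, q f ≤ 1 ∧ C < p (T^[m] f)) :
    ¬ PowerBoundedS T := by
  intro hT
  obtain ⟨q, hq, hpq⟩ := hT p hp
  obtain ⟨m, hm, hC⟩ := h q hq
  obtain ⟨f, hf, hlt⟩ := hC 1
  linarith [hpq m hm f]

def ScalesGaussPairing (T : 𝓢(ℝ, ℂ) → 𝓢(ℝ, ℂ)) : Prop :=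
  ∀ (a : ℝ) (m : ℕ), gaussPairing a (T^[m] (gaussianAt a)) =
    ((a / √2 : ℝ) : ℂ) ^ m * gaussPairing a (gaussianAt a)

theorem scalesGaussPairing_creationOp : ScalesGaussPairing creationOp := by
  intro a m
  induction m with
  | zero => simp
  | succ m ih =>
    rw [Function.iterate_succ_apply', gaussPairing_creationOp, ih]
    ring

theorem scalesGaussPairing_annihilationOp : ScalesGaussPairing annihilationOp := by
  intro a m
  have h : annihilationOp^[m] (gaussianAt a) = (a / √2) ^ m • gaussianAt a := by
    induction m with
    | zero => simp
    | succ m ih =>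
      rw [Function.iterate_succ_apply', ih, ← coe_annihilationCLM,
        ContinuousLinearMap.map_smul_of_tower,
        coe_annihilationCLM, annihilationOp_gaussianAt, smul_smul, pow_succ]
  rw [h, ContinuousLinearMap.map_smul_of_tower, Complex.real_smul]
  push_cast
  rfl

namespace ScalesGaussPairing

variable {T : 𝓢(ℝ, ℂ) → 𝓢(ℝ, ℂ)}

theorem div_pow_le_seminorm (hG : ScalesGaussPairing T) {a : ℝ} (ha : 0 ≤ a) (m : ℕ) :
    (a / √2) ^ m / √2 ≤ SchwartzMap.seminorm ℂ 0 0 (T^[m] (gaussianAt a)) := by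
  have h := norm_gaussPairing_le a (T^[m] (gaussianAt a))
  rw [hG, gaussPairing_gaussianAt, norm_mul, norm_pow, Complex.norm_real, Complex.norm_real,
    Real.norm_of_nonneg (by positivity), Real.norm_of_nonneg (by positivity),
    Real.sqrt_mul zero_le_two, mul_assoc] at h
  rw [div_le_iff₀' (by positivity)]
  exact le_of_mul_le_mul_left (by linarith) (Real.sqrt_pos.mpr pi_pos)

theorem exists_unbounded_iterate (hT : ∀ (c : ℝ) f, T (c • f) = c • T f)
    (hG : ScalesGaussPairing T) (q : Seminorm ℝ 𝓢(ℝ, ℂ)) (hq : Continuous q) :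
    ∃ m : ℕ, 1 ≤ m ∧ ∀ C : ℝ, ∃ f, q f ≤ 1 ∧
      C < (SchwartzMap.seminorm ℂ 0 0).restrictScalars ℝ (T^[m] f) := by
  obtain ⟨K, D, hD, hqD⟩ := SchwartzMap.exists_seminorm_compSubConstCLM_le q hq
    (SchwartzMap.postcompCLM Complex.ofRealCLM gaussianSchwartz)
  refine ⟨K + 1, by omega, exists_lt_seminorm_iterate_of_growth hT (φ := gaussianAt)
    (c := (√2)⁻¹ ^ (K + 1) / √2) (D := D * 2 ^ K) (by positivity) (by positivity)
    (fun a ha => ?_) (fun a ha => ?_)⟩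
  · calc q (gaussianAt a) ≤ D * (1 + ‖a‖) ^ K := hqD a
      _ ≤ D * (2 * a) ^ K := by
          rw [Real.norm_of_nonneg (by linarith)]; gcongr; linarith
      _ = D * 2 ^ K * a ^ K := by ring
  · calc (√2)⁻¹ ^ (K + 1) / √2 * a ^ (K + 1) = (a / √2) ^ (K + 1) / √2 := by ring
      _ ≤ _ := hG.div_pow_le_seminorm (by linarith) (K + 1)

theorem not_meanErgodicS (hG : ScalesGaussPairing T) : ¬ MeanErgodicS T := by
  rintro ⟨P, hP⟩
  have hlim := (((schwartz_withSeminorms ℂ ℝ ℂ).continuous_seminorm (0, 0)).tendsto 0).comp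
    (tendsto_inv_smul_iterate_of_tendsto_cesaro (hP (gaussianAt (2 * √2))))
  rw [map_zero] at hlim
  have hbound : ∀ n : ℕ, (√2)⁻¹ ≤ SchwartzMap.seminorm ℂ 0 0
      (((n + 1 : ℕ) : ℂ)⁻¹ • T^[n + 1] (gaussianAt (2 * √2))) := fun n => by
    have h := hG.div_pow_le_seminorm (a := 2 * √2) (by positivity) (n + 1)
    rw [mul_div_cancel_right₀ _ (Real.sqrt_pos.mpr two_pos).ne'] at h
    have h2 : ((n + 1 : ℕ) : ℝ) ≤ 2 ^ (n + 1) := by exact_mod_cast Nat.lt_two_pow_self.le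
    rw [map_smul_eq_mul, norm_inv, Complex.norm_natCast, le_inv_mul_iff₀ (by positivity)]
    calc ((n + 1 : ℕ) : ℝ) * (√2)⁻¹ ≤ 2 ^ (n + 1) / √2 := by
          rw [div_eq_mul_inv]; gcongr
      _ ≤ _ := h
  exact absurd (ge_of_tendsto' hlim hbound) (not_le.mpr (by positivity))

theorem not_topologizable_not_powerBoundedS_not_meanErgodicS
    (hT : ∀ (c : ℝ) f, T (c • f) = c • T f) (hG : ScalesGaussPairing T) :
    (∃ p : Seminorm ℝ (SchwartzMap ℝ ℂ), Continuous p ∧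
      ∀ q : Seminorm ℝ (SchwartzMap ℝ ℂ), Continuous q →
        ∃ m : ℕ, 1 ≤ m ∧ ∀ C : ℝ, ∃ f : SchwartzMap ℝ ℂ, q f ≤ 1 ∧ C < p (T^[m] f)) ∧
      ¬ PowerBoundedS T ∧ ¬ MeanErgodicS T := by
  have hp : Continuous ((SchwartzMap.seminorm ℂ 0 0).restrictScalars ℝ : Seminorm ℝ 𝓢(ℝ, ℂ)) :=
    (schwartz_withSeminorms ℂ ℝ ℂ).continuous_seminorm (0, 0)
  exact ⟨⟨_, hp, hG.exists_unbounded_iterate hT⟩,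
    not_powerBoundedS_of_unbounded_iterate hp (hG.exists_unbounded_iterate hT),
    hG.not_meanErgodicS⟩

end ScalesGaussPairing

/-- Theorem 4.4 (iv): the creation and annihilation operators are continuous linear operators
on `𝒮(ℝ)`, but neither is topologizable — for each of them there is a continuous seminorm `p`
such that for every continuous seminorm `q` some power has unbounded `p`-norm on the `q`-unit
ball; in particular neither is power bounded nor mean ergodic. -/
theorem statement19 :
    (IsLinearMap ℂ creationOp ∧ Continuous creationOp) ∧
    (IsLinearMap ℂ annihilationOp ∧ Continuous annihilationOp) ∧
    (∀ T ∈ ({creationOp, annihilationOp} : Set (SchwartzMap ℝ ℂ → SchwartzMap ℝ ℂ)),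
      (∃ p : Seminorm ℝ (SchwartzMap ℝ ℂ), Continuous p ∧
        ∀ q : Seminorm ℝ (SchwartzMap ℝ ℂ), Continuous q →
          ∃ m : ℕ, 1 ≤ m ∧ ∀ C : ℝ, ∃ f : SchwartzMap ℝ ℂ, q f ≤ 1 ∧ C < p (T^[m] f)) ∧
      ¬ PowerBoundedS T ∧ ¬ MeanErgodicS T) := by
  rw [← coe_creationCLM, ← coe_annihilationCLM]
  refine ⟨⟨creationCLM.toLinearMap.isLinear, creationCLM.continuous⟩,
    ⟨annihilationCLM.toLinearMap.isLinear, annihilationCLM.continuous⟩, ?_⟩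
  rintro T (rfl | rfl)
  · exact scalesGaussPairing_creationOp.not_topologizable_not_powerBoundedS_not_meanErgodicS
      (creationCLM.map_smul_of_tower)
  · exact scalesGaussPairing_annihilationOp.not_topologizable_not_powerBoundedS_not_meanErgodicS
      (annihilationCLM.map_smul_of_tower)
end
end
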